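/- arXiv:2110.14173 — 9 statements merged into one kernel-verified Lean document; each statement's English description precedes it below -/
import Mathlib

section
/- Let g : ℝⁿ → ℝ be convex, strictly positive, and suppose that for every y ∈ ℝⁿ the function x ↦ g(x+y)/g(x) is convex. Then there exist a symmetric positive semidefinite matrix A ∈ ℝ^{n×n}, a vector b ∈ ℝⁿ, and c ∈ ℝ such that g(x) = exp((1/2) xᵀAx + bᵀx + c) for all x. -/
open Matrix

private lemma aux_exp_quad {u : ℝ} (hu : |u| ≤ 1) : Real.exp u ≤ 1 + u + (3/4) * u^2 := by
  have h := Real.exp_bound hu (n := 2) (by norm_num)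
  have h2 : |Real.exp u - (1 + u)| ≤ |u|^2 * (3/4) := by
    convert h using 2
    · norm_num [Finset.sum_range_succ]
    · norm_num
  have := (abs_le.mp h2).2
  have hsq : |u|^2 = u^2 := sq_abs u
  nlinarith

private lemma aux_two_le (a b : ℝ) (h2 : 2 ≤ Real.exp (-a) + Real.exp (-b))
    (hd : |a - b| ≤ 2) : a + b ≤ (3/8) * (a-b)^2 := by
  set u : ℝ := (a-b)/2 with hu
  have hu1 : |u| ≤ 1 := by rw [hu, abs_div]; simp only [abs_two]; linarith [abs_nonneg (a-b)]
  have key : Real.exp ((a+b)/2) ≤ (Real.exp (-u) + Real.exp u)/2 := by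
    have hp := Real.exp_pos ((a+b)/2)
    have hmul := mul_le_mul_of_nonneg_left h2 hp.le
    rw [mul_add, ← Real.exp_add, ← Real.exp_add] at hmul
    have e1 : (a+b)/2 + -a = -u := by rw [hu]; ring
    have e2 : (a+b)/2 + -b = u := by rw [hu]; ring
    rw [e1, e2] at hmul
    linarith
  have h3 : (Real.exp (-u) + Real.exp u)/2 ≤ 1 + (3/4)*u^2 := by
    have q1 := aux_exp_quad hu1
    have q2 := aux_exp_quad (by rwa [abs_neg] : |(-u : ℝ)| ≤ 1)
    have : (-u)^2 = u^2 := by ring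
    rw [this] at q2
    linarith
  have h4 : (1:ℝ) + (3/4)*u^2 ≤ Real.exp ((3/4)*u^2) := by
    have := Real.add_one_le_exp ((3/4)*u^2); linarith
  have h5 : Real.exp ((a+b)/2) ≤ Real.exp ((3/4)*u^2) := le_trans key (le_trans h3 h4)
  have h6 := Real.exp_le_exp.mp h5
  rw [hu] at h6
  nlinarith [h6]

private lemma aux_logdiff {m p q : ℝ} (hm : 0 < m) (hp : m ≤ p) (hq : m ≤ q) :
    |Real.log p - Real.log q| ≤ |p - q| / m := by
  have key : ∀ p q : ℝ, m ≤ p → m ≤ q → q ≤ p → Real.log p - Real.log q ≤ (p - q)/m := by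
    intro p q hp hq hqp
    have hq0 : 0 < q := lt_of_lt_of_le hm hq
    have hp0 : 0 < p := lt_of_lt_of_le hm hp
    have h1 : Real.log p - Real.log q = Real.log (p/q) := (Real.log_div hp0.ne' hq0.ne').symm
    have h2 : Real.log (p/q) ≤ p/q - 1 := Real.log_le_sub_one_of_pos (by positivity)
    have h3 : p/q - 1 = (p-q)/q := by field_simp
    have h4 : (p-q)/q ≤ (p-q)/m := by
      apply div_le_div_of_nonneg_left (by linarith) hm hq
    linarith
  rcases le_total q p with h | h
  · have hl : Real.log q ≤ Real.log p := Real.log_le_log (lt_of_lt_of_le hm hq) h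
    rw [abs_of_nonneg (by linarith : (0:ℝ) ≤ Real.log p - Real.log q),
      abs_of_nonneg (by linarith : (0:ℝ) ≤ p - q)]
    exact key p q hp hq h
  · have hl : Real.log p ≤ Real.log q := Real.log_le_log (lt_of_lt_of_le hm hp) h
    rw [abs_sub_comm, abs_sub_comm p q,
      abs_of_nonneg (by linarith : (0:ℝ) ≤ Real.log q - Real.log p),
      abs_of_nonneg (by linarith : (0:ℝ) ≤ q - p)]
    exact key q p hq hp h

private lemma aux_tele {ψ : ℝ → ℝ} {C δ : ℝ} (hδ : 0 < δ)
    (H : ∀ t ∈ Set.Icc (0:ℝ) 1, ∀ t' ∈ Set.Icc (0:ℝ) 1, |t' - t| ≤ δ →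
      |ψ t' - ψ t| ≤ C * (t' - t)^2) :
    ψ 1 = ψ 0 := by
  have h0 : (0:ℝ) ∈ Set.Icc (0:ℝ) 1 := by norm_num
  have hmin : (0:ℝ) < min δ 1 := lt_min hδ zero_lt_one
  have h01 : min δ 1 ∈ Set.Icc (0:ℝ) 1 := ⟨hmin.le, min_le_right _ _⟩
  have hC : 0 ≤ C := by
    have := H 0 h0 (min δ 1) h01 (by
      rw [sub_zero, abs_of_nonneg hmin.le]; exact min_le_left _ _)
    rw [sub_zero] at this
    nlinarith [abs_nonneg (ψ (min δ 1) - ψ 0), pow_pos hmin 2]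
  have key : ∀ N : ℕ, 0 < N → (1:ℝ)/N ≤ δ → |ψ 1 - ψ 0| ≤ C / N := by
    intro N hN hδN
    have hNR : (0:ℝ) < N := Nat.cast_pos.mpr hN
    have tel : ∑ i ∈ Finset.range N, (ψ ((i+1:ℕ)/N) - ψ ((i:ℕ)/N))
        = ψ ((N:ℕ)/(N:ℝ)) - ψ ((0:ℕ)/(N:ℝ)) := Finset.sum_range_sub (fun k : ℕ => ψ ((k:ℝ)/N)) N
    rw [show ((N:ℕ):ℝ)/(N:ℝ) = 1 from div_self hNR.ne', Nat.cast_zero, zero_div] at tel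
    have hbound : ∀ i ∈ Finset.range N, |ψ ((i+1:ℕ)/N) - ψ ((i:ℕ)/N)| ≤ C * (1/N)^2 := by
      intro i hi
      have hiN : i < N := Finset.mem_range.mp hi
      have hi1 : ((i:ℝ)+1) ≤ N := by exact_mod_cast Nat.succ_le_of_lt hiN
      have hstep : ((i+1:ℕ):ℝ)/N - ((i:ℕ):ℝ)/N = 1/N := by push_cast; ring
      have ht : ((i:ℕ):ℝ)/N ∈ Set.Icc (0:ℝ) 1 := by
        constructor
        · positivity
        · rw [div_le_one hNR]; linarith
      have ht' : ((i+1:ℕ):ℝ)/N ∈ Set.Icc (0:ℝ) 1 := by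
        constructor
        · positivity
        · rw [div_le_one hNR]; push_cast; linarith
      have := H _ ht _ ht' (by rw [hstep, abs_of_nonneg (by positivity)]; exact hδN)
      rwa [hstep] at this
    calc |ψ 1 - ψ 0| = |∑ i ∈ Finset.range N, (ψ ((i+1:ℕ)/N) - ψ ((i:ℕ)/N))| := by rw [tel]
      _ ≤ ∑ i ∈ Finset.range N, |ψ ((i+1:ℕ)/N) - ψ ((i:ℕ)/N)| :=
          Finset.abs_sum_le_sum_abs _ _
      _ ≤ ∑ _i ∈ Finset.range N, C * (1/N)^2 := Finset.sum_le_sum hbound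
      _ = N * (C * (1/N)^2) := by rw [Finset.sum_const, Finset.card_range, nsmul_eq_mul]
      _ = C / N := by field_simp
  by_contra hne
  have hpos : 0 < |ψ 1 - ψ 0| := abs_pos.mpr (sub_ne_zero.mpr hne)
  obtain ⟨N, hN⟩ := exists_nat_gt (max (1/δ) (C / |ψ 1 - ψ 0|))
  have hNR : (0:ℝ) < N := lt_of_le_of_lt (le_trans (by positivity) (le_max_left (1/δ) _)) hN
  have hN0 : 0 < N := Nat.cast_pos.mp hNR
  have h1N : (1:ℝ)/N ≤ δ := by
    have h2 : 1/δ < N := lt_of_le_of_lt (le_max_left _ _) hN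
    rw [div_le_iff₀ hNR]
    rw [div_lt_iff₀ hδ] at h2
    nlinarith
  have hkey := key N hN0 h1N
  have hCN : C / N < |ψ 1 - ψ 0| := by
    have h3 : C / |ψ 1 - ψ 0| < N := lt_of_le_of_lt (le_max_right _ _) hN
    rw [div_lt_iff₀ hpos] at h3
    rw [div_lt_iff₀ hNR]
    nlinarith
  linarith

private def stdb {n : ℕ} (i : Fin n) : Fin n → ℝ := fun j => if i = j then 1 else 0

private lemma stdb_expand {n : ℕ} (x : Fin n → ℝ) : x = ∑ i, x i • stdb i := by
  unfold stdb
  simpa using pi_eq_sum_univ x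

private lemma aux_linpart {n : ℕ} {r : (Fin n → ℝ) → ℝ} (hcont : Continuous r)
    (hmid : ∀ x h : Fin n → ℝ, r (x+h) + r (x-h) = 2 * r x) :
    ∃ b : Fin n → ℝ, ∀ x, r x = b ⬝ᵥ x + r 0 := by
  have hadd : ∀ u v : Fin n → ℝ, (r (u+v) - r 0) = (r u - r 0) + (r v - r 0) := by
    intro u v
    have h1 := hmid ((1/2:ℝ)•(u+v)) ((1/2:ℝ)•(u-v))
    rw [show (1/2:ℝ)•(u+v) + (1/2:ℝ)•(u-v) = u by module,
        show (1/2:ℝ)•(u+v) - (1/2:ℝ)•(u-v) = v by module] at h1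
    have h2 := hmid ((1/2:ℝ)•(u+v)) ((1/2:ℝ)•(u+v))
    rw [show (1/2:ℝ)•(u+v) + (1/2:ℝ)•(u+v) = u + v by module, sub_self] at h2
    linarith
  set s : (Fin n → ℝ) → ℝ := fun x => r x - r 0 with hs
  have hsadd : ∀ u v, s (u+v) = s u + s v := hadd
  have hscont : Continuous s := hcont.sub continuous_const
  set sA : (Fin n → ℝ) →+ ℝ := AddMonoidHom.mk' s hsadd with hsA
  have hsmul : ∀ (c : ℝ) (x : Fin n → ℝ), s (c • x) = c * s x := by
    intro c x
    exact map_real_smul sA hscont c x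
  refine ⟨fun i => s (stdb i), fun x => ?_⟩
  have hexp : s x = ∑ i, x i * s (stdb i) := by
    conv_lhs => rw [stdb_expand x]
    rw [show s (∑ i, x i • stdb i) = sA (∑ i, x i • stdb i) from rfl, map_sum]
    exact Finset.sum_congr rfl fun i _ => hsmul (x i) (stdb i)
  have : r x = s x + r 0 := by rw [hs]; ring
  rw [this, hexp]
  simp only [dotProduct]
  congr 1
  exact Finset.sum_congr rfl fun i _ => mul_comm _ _

private lemma aux_quadform {n : ℕ} {B : (Fin n → ℝ) → ℝ} (hcont : Continuous B)
    (heven : ∀ h, B (-h) = B h)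
    (hpar : ∀ h k, B (h+k) + B (h-k) = 2*B h + 2*B k) :
    ∃ A : Matrix (Fin n) (Fin n) ℝ, (∀ i j, A i j = A j i) ∧
      ∀ x, x ⬝ᵥ (A *ᵥ x) = B x := by
  have hB0 : B 0 = 0 := by have := hpar 0 0; simp at this; linarith
  set Φ : (Fin n → ℝ) → (Fin n → ℝ) → ℝ := fun u v => (B (u+v) - B (u-v))/4 with hΦ
  have hΦ0 : ∀ w, Φ 0 w = 0 := by
    intro w; rw [hΦ]; simp only [zero_add, zero_sub, heven, sub_self, zero_div]
  have hhalf : ∀ u v w, Φ u w + Φ v w = 2 * Φ ((1/2:ℝ)•(u+v)) w := by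
    intro u v w
    have P1 := hpar ((1/2:ℝ)•(u+v)+w) ((1/2:ℝ)•(u-v))
    rw [show ((1/2:ℝ)•(u+v)+w) + (1/2:ℝ)•(u-v) = u + w by module,
        show ((1/2:ℝ)•(u+v)+w) - (1/2:ℝ)•(u-v) = v + w by module] at P1
    have P2 := hpar ((1/2:ℝ)•(u+v)-w) ((1/2:ℝ)•(u-v))
    rw [show ((1/2:ℝ)•(u+v)-w) + (1/2:ℝ)•(u-v) = u - w by module,
        show ((1/2:ℝ)•(u+v)-w) - (1/2:ℝ)•(u-v) = v - w by module] at P2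
    rw [hΦ]
    dsimp only
    linarith
  have hΦadd : ∀ u v w, Φ (u+v) w = Φ u w + Φ v w := by
    intro u v w
    have h1 := hhalf u v w
    have h2 := hhalf (u+v) 0 w
    rw [add_zero, hΦ0] at h2
    linarith
  have hΦsymm : ∀ u v, Φ u v = Φ v u := by
    intro u v
    rw [hΦ]
    dsimp only
    rw [show v + u = u + v from add_comm v u, show v - u = -(u-v) by abel, heven]
  have hΦcont : ∀ w, Continuous (fun u => Φ u w) := by
    intro w
    rw [hΦ]
    exact ((hcont.comp (continuous_id.add continuous_const)).sub
      (hcont.comp (continuous_id.sub continuous_const))).div_const 4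
  have hsmul : ∀ w (c : ℝ) u, Φ (c • u) w = c * Φ u w := by
    intro w c u
    exact map_real_smul (AddMonoidHom.mk' (fun u => Φ u w) (fun a b => hΦadd a b w))
      (hΦcont w) c u
  have hexp : ∀ (x w : Fin n → ℝ), Φ x w = ∑ i, x i * Φ (stdb i) w := by
    intro x w
    conv_lhs => rw [stdb_expand x]
    rw [show Φ (∑ i, x i • stdb i) w
        = (AddMonoidHom.mk' (fun u => Φ u w) (fun a b => hΦadd a b w)) (∑ i, x i • stdb i)
        from rfl, map_sum]
    exact Finset.sum_congr rfl fun i _ => hsmul w (x i) (stdb i)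
  have hBx : ∀ x, B x = Φ x x := by
    intro x
    rw [hΦ]
    dsimp only
    rw [sub_self, hB0]
    have := hpar x x
    rw [sub_self, hB0] at this
    linarith
  refine ⟨Matrix.of (fun i j => Φ (stdb i) (stdb j)), fun i j => hΦsymm _ _, fun x => ?_⟩
  rw [hBx, hexp x x]
  simp only [dotProduct, Matrix.mulVec, Matrix.of_apply, dotProduct]
  refine Finset.sum_congr rfl fun i _ => ?_
  congr 1
  rw [hΦsymm (stdb i) x, hexp x (stdb i)]
  refine Finset.sum_congr rfl fun j _ => ?_
  rw [mul_comm, hΦsymm (stdb i) (stdb j)]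

private lemma aux_div (p q r : ℝ) (h : Real.exp p ≤ 1/2*Real.exp q + 1/2*Real.exp r) :
    2 ≤ Real.exp (q - p) + Real.exp (r - p) := by
  rw [Real.exp_sub, Real.exp_sub, ← add_div, le_div_iff₀ (Real.exp_pos p)]
  linarith

theorem stmt1 {n : ℕ} (g : (Fin n → ℝ) → ℝ)
    (hconv : ConvexOn ℝ Set.univ g) (hpos : ∀ x, 0 < g x)
    (hratio : ∀ y : Fin n → ℝ, ConvexOn ℝ Set.univ (fun x => g (x + y) / g x)) :
    ∃ (A : Matrix (Fin n) (Fin n) ℝ) (b : Fin n → ℝ) (c : ℝ),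
      A.PosSemidef ∧
      ∀ x, g x = Real.exp ((1 / 2) * (x ⬝ᵥ (A *ᵥ x)) + b ⬝ᵥ x + c) := by
  classical
  obtain ⟨f, hfdef⟩ : ∃ f : (Fin n → ℝ) → ℝ, f = fun x => Real.log (g x) := ⟨_, rfl⟩
  have hcont_g : Continuous g := by
    rw [← continuousOn_univ]
    exact hconv.continuousOn isOpen_univ
  have hf_cont : Continuous f := by
    rw [hfdef]; exact hcont_g.log (fun x => (hpos x).ne')
  have hexpf : ∀ x, Real.exp (f x) = g x := by
    intro x; rw [hfdef]; exact Real.exp_log (hpos x)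
  have hge : ∀ (y z : Fin n → ℝ), g (z + y) / g z = Real.exp (f (z+y) - f z) := by
    intro y z
    simp only [hfdef]
    rw [Real.exp_sub, Real.exp_log (hpos _), Real.exp_log (hpos _)]
  -- midpoint inequality for ratio convexity
  have hmidr : ∀ (y u v : Fin n → ℝ),
      Real.exp (f ((1/2:ℝ)•u + (1/2:ℝ)•v + y) - f ((1/2:ℝ)•u + (1/2:ℝ)•v))
        ≤ 1/2 * Real.exp (f (u+y) - f u) + 1/2 * Real.exp (f (v+y) - f v) := by
    intro y u v
    have hcvx := (hratio y).2 (Set.mem_univ u) (Set.mem_univ v)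
      (by norm_num : (0:ℝ) ≤ 1/2) (by norm_num : (0:ℝ) ≤ 1/2) (by norm_num : (1/2:ℝ) + 1/2 = 1)
    dsimp only at hcvx
    rw [smul_eq_mul, smul_eq_mul] at hcvx
    rw [hge y ((1/2:ℝ)•u + (1/2:ℝ)•v), hge y u, hge y v] at hcvx
    exact hcvx
  -- the key one-step inequality
  have hstep : ∀ (X h Y : Fin n → ℝ),
      |(f (X+Y+h) - f (X+h)) - (f (X+Y-h) - f (X-h))| ≤ 2 →
      |(f (X+Y+h) + f (X+Y-h) - 2*f (X+Y)) - (f (X+h) + f (X-h) - 2*f X)|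
        ≤ (3/8) * ((f (X+Y+h) - f (X+h)) - (f (X+Y-h) - f (X-h)))^2 := by
    intro X h Y hd
    have h1 := hmidr Y (X+h) (X-h)
    rw [show (1/2:ℝ)•(X+h) + (1/2:ℝ)•(X-h) = X by module] at h1
    rw [show X+h+Y = X+Y+h by abel, show X-h+Y = X+Y-h by abel] at h1
    have h2 := hmidr (-Y) (X+Y+h) (X+Y-h)
    rw [show (1/2:ℝ)•(X+Y+h) + (1/2:ℝ)•(X+Y-h) = X+Y by module] at h2
    rw [show X+Y+(-Y) = X by abel, show X+Y+h+(-Y) = X+h by abel,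
        show X+Y-h+(-Y) = X-h by abel] at h2
    obtain ⟨a, ha⟩ : ∃ z : ℝ, z = (f (X+Y+h) - f (X+h)) - (f (X+Y) - f X) := ⟨_, rfl⟩
    obtain ⟨b, hb⟩ : ∃ z : ℝ, z = (f (X+Y-h) - f (X-h)) - (f (X+Y) - f X) := ⟨_, rfl⟩
    have key1 : 2 ≤ Real.exp a + Real.exp b := by
      rw [ha, hb]; exact aux_div _ _ _ h1
    have key2 : 2 ≤ Real.exp (-a) + Real.exp (-b) := by
      have e1 : -a = (f (X+h) - f (X+Y+h)) - (f X - f (X+Y)) := by rw [ha]; ring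
      have e2 : -b = (f (X-h) - f (X+Y-h)) - (f X - f (X+Y)) := by rw [hb]; ring
      rw [e1, e2]; exact aux_div _ _ _ h2
    have hdab : a - b = (f (X+Y+h) - f (X+h)) - (f (X+Y-h) - f (X-h)) := by
      rw [ha, hb]; ring
    have k1 := aux_two_le a b key2 (by rw [hdab]; exact hd)
    have k2 := aux_two_le (-a) (-b) (by simpa using key1)
      (by rw [show -a - -b = -(a-b) by ring, abs_neg, hdab]; exact hd)
    rw [show -a - -b = -(a-b) by ring, neg_sq] at k2
    have hsum : (f (X+Y+h) + f (X+Y-h) - 2*f (X+Y)) - (f (X+h) + f (X-h) - 2*f X)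
        = a + b := by rw [ha, hb]; ring
    rw [hsum, ← hdab, abs_le]
    constructor <;> linarith
  -- local Lipschitz bounds for f
  have hL : ∀ R : ℝ, 0 ≤ R → ∃ L : ℝ, 0 ≤ L ∧
      ∀ x y : Fin n → ℝ, ‖x‖ ≤ R → ‖y‖ ≤ R → |f x - f y| ≤ L * ‖x - y‖ := by
    intro R hR
    have hball : ConvexOn ℝ (Metric.ball (0:Fin n → ℝ) (R+2)) g :=
      hconv.subset (Set.subset_univ _) (convex_ball 0 (R+2))
    have hbd : Bornology.IsBounded (g '' Metric.ball (0:Fin n → ℝ) (R+2)) :=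
      (((isCompact_closedBall (0:Fin n → ℝ) (R+2)).image hcont_g).isBounded).subset
        (Set.image_mono Metric.ball_subset_closedBall)
    obtain ⟨K, hK⟩ := hball.exists_lipschitzOnWith_of_isBounded
      (by linarith : R+1 < R+2) hbd
    obtain ⟨z, hz, hminz⟩ := (isCompact_closedBall (0:Fin n → ℝ) (R+1)).exists_isMinOn
      ⟨0, Metric.mem_closedBall_self (by linarith)⟩ hcont_g.continuousOn
    have hm : 0 < g z := hpos z
    refine ⟨(K:ℝ)/(g z), by positivity, ?_⟩
    intro x y hx hy
    have hx' : x ∈ Metric.ball (0:Fin n → ℝ) (R+1) := by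
      rw [mem_ball_zero_iff]; linarith
    have hy' : y ∈ Metric.ball (0:Fin n → ℝ) (R+1) := by
      rw [mem_ball_zero_iff]; linarith
    have hgx : g z ≤ g x := hminz (Metric.ball_subset_closedBall hx')
    have hgy : g z ≤ g y := hminz (Metric.ball_subset_closedBall hy')
    have hlip : |g x - g y| ≤ (K:ℝ) * ‖x - y‖ := by
      have := hK.dist_le_mul x hx' y hy'
      rwa [Real.dist_eq, dist_eq_norm] at this
    have hlog : |f x - f y| ≤ |g x - g y| / (g z) := by
      simp only [hfdef]
      exact aux_logdiff hm hgx hgy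
    calc |f x - f y| ≤ |g x - g y| / (g z) := hlog
      _ ≤ ((K:ℝ) * ‖x - y‖) / (g z) := by gcongr
      _ = ((K:ℝ)/(g z)) * ‖x - y‖ := by ring
  -- second differences are independent of base point
  have hconst : ∀ (h x x' : Fin n → ℝ),
      f (x'+h) + f (x'-h) - 2*f x' = f (x+h) + f (x-h) - 2*f x := by
    intro h x x'
    obtain ⟨y, hy⟩ : ∃ y : Fin n → ℝ, y = x' - x := ⟨_, rfl⟩
    obtain ⟨L, hL0, hLip⟩ := hL (‖x‖ + ‖y‖ + ‖h‖) (by positivity)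
    have hLy : 0 ≤ L * ‖y‖ := mul_nonneg hL0 (norm_nonneg y)
    have hδpos : 0 < 1/(L*‖y‖+1) := by
      apply one_div_pos.mpr; linarith
    have H : ∀ t ∈ Set.Icc (0:ℝ) 1, ∀ t' ∈ Set.Icc (0:ℝ) 1, |t' - t| ≤ 1/(L*‖y‖+1) →
        |(fun t : ℝ => f (x + t•y + h) + f (x + t•y - h) - 2*f (x + t•y)) t'
          - (fun t : ℝ => f (x + t•y + h) + f (x + t•y - h) - 2*f (x + t•y)) t|
        ≤ ((3/8) * (2*L*‖y‖)^2) * (t' - t)^2 := by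
      intro t ht t' ht' hdist
      dsimp only
      have hnorm : ∀ s : ℝ, s ∈ Set.Icc (0:ℝ) 1 → ‖x + s•y‖ ≤ ‖x‖ + ‖y‖ := by
        intro s hs
        calc ‖x + s•y‖ ≤ ‖x‖ + ‖s•y‖ := norm_add_le _ _
          _ ≤ ‖x‖ + ‖y‖ := by
            rw [norm_smul, Real.norm_eq_abs]
            have h1 : |s| ≤ 1 := abs_le.mpr ⟨by linarith [hs.1], hs.2⟩
            nlinarith [norm_nonneg y]
      have np : ∀ s : ℝ, s ∈ Set.Icc (0:ℝ) 1 → ‖x + s•y + h‖ ≤ ‖x‖+‖y‖+‖h‖ := fun s hs =>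
        le_trans (norm_add_le _ _) (by linarith [hnorm s hs])
      have nm : ∀ s : ℝ, s ∈ Set.Icc (0:ℝ) 1 → ‖x + s•y - h‖ ≤ ‖x‖+‖y‖+‖h‖ := fun s hs =>
        le_trans (norm_sub_le _ _) (by linarith [hnorm s hs])
      have l1 : |f (x + t'•y + h) - f (x + t•y + h)| ≤ L * (|t'-t| * ‖y‖) := by
        have hthis := hLip _ _ (np t' ht') (np t ht)
        rw [show (x + t'•y + h) - (x + t•y + h) = (t'-t)•y by module,
          norm_smul, Real.norm_eq_abs] at hthis
        exact hthis
      have l2 : |f (x + t'•y - h) - f (x + t•y - h)| ≤ L * (|t'-t| * ‖y‖) := by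
        have hthis := hLip _ _ (nm t' ht') (nm t ht)
        rw [show (x + t'•y - h) - (x + t•y - h) = (t'-t)•y by module,
          norm_smul, Real.norm_eq_abs] at hthis
        exact hthis
      have hs := hstep (x + t•y) h ((t'-t)•y)
      rw [show x + t•y + (t'-t)•y = x + t'•y by module] at hs
      have hdb : |(f (x + t'•y + h) - f (x + t•y + h))
          - (f (x + t'•y - h) - f (x + t•y - h))| ≤ 2*L*‖y‖*|t'-t| := by
        have tri := abs_sub (f (x + t'•y + h) - f (x + t•y + h))
          (f (x + t'•y - h) - f (x + t•y - h))
        nlinarith [l1, l2]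
      have hd2 : |(f (x + t'•y + h) - f (x + t•y + h))
          - (f (x + t'•y - h) - f (x + t•y - h))| ≤ 2 := by
        have step1 : 2*L*‖y‖*|t'-t| ≤ 2*L*‖y‖*(1/(L*‖y‖+1)) :=
          mul_le_mul_of_nonneg_left hdist (by linarith)
        have step2 : 2*L*‖y‖*(1/(L*‖y‖+1)) ≤ 2 := by
          rw [mul_one_div, div_le_iff₀ (by linarith : (0:ℝ) < L*‖y‖+1)]
          linarith
        linarith
      refine le_trans (hs hd2) ?_
      have hsq : ((f (x + t'•y + h) - f (x + t•y + h))
          - (f (x + t'•y - h) - f (x + t•y - h)))^2 ≤ (2*L*‖y‖*|t'-t|)^2 := by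
        nlinarith [hdb, sq_abs ((f (x + t'•y + h) - f (x + t•y + h))
          - (f (x + t'•y - h) - f (x + t•y - h))),
          abs_nonneg ((f (x + t'•y + h) - f (x + t•y + h))
          - (f (x + t'•y - h) - f (x + t•y - h)))]
      nlinarith [hsq, sq_abs (t'-t)]
    have hψ := aux_tele hδpos H
    simp only [one_smul, zero_smul, add_zero] at hψ
    rw [show x + y = x' by rw [hy]; abel] at hψ
    exact hψ
  -- the quadratic form B
  obtain ⟨B, hBdef⟩ : ∃ B : (Fin n → ℝ) → ℝ, B = fun h => f h + f (-h) - 2*f 0 := ⟨_, rfl⟩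
  have hB : ∀ x h, f (x+h) + f (x-h) - 2*f x = B h := by
    intro x h
    have hthis := hconst h 0 x
    rw [zero_add, zero_sub] at hthis
    rw [hthis, hBdef]

  have hBeven : ∀ h, B (-h) = B h := by
    intro h; rw [hBdef]; dsimp only; rw [neg_neg]; ring
  have hBcont : Continuous B := by
    rw [hBdef]
    exact (hf_cont.add (hf_cont.comp continuous_neg)).sub continuous_const
  have hB0 : B 0 = 0 := by rw [hBdef]; dsimp only; rw [neg_zero]; ring
  have hBpar : ∀ h k, B (h+k) + B (h-k) = 2*B h + 2*B k := by
    intro h k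
    have i1 := hB h k
    have i2 := hB (-h) k
    rw [show -h + k = -(h-k) by abel, show -h - k = -(h+k) by abel] at i2
    have d1 := hB 0 (h+k); have d2 := hB 0 (h-k); have d3 := hB 0 h; have d4 := hB 0 k
    rw [zero_add, zero_sub] at d1
    rw [zero_add, zero_sub] at d2
    rw [zero_add, zero_sub] at d3
    rw [zero_add, zero_sub] at d4
    linarith
  obtain ⟨A, hAsymm, hAeq⟩ := aux_quadform hBcont hBeven hBpar
  -- the linear part
  have hrmid : ∀ x h : Fin n → ℝ,
      (fun x => f x - B x / 2) (x+h) + (fun x => f x - B x / 2) (x-h)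
        = 2 * (fun x => f x - B x / 2) x := by
    intro x h
    dsimp only
    have e1 := hB x h
    have e2 := hBpar x h
    linear_combination e1 - e2/2
  obtain ⟨b, hb⟩ := aux_linpart (hf_cont.sub (hBcont.div_const 2)) hrmid
  have hform : ∀ x, f x = (1/2)*(x ⬝ᵥ (A *ᵥ x)) + b ⬝ᵥ x + Real.log (g 0) := by
    intro x
    have h1 := hb x
    have hlog0 : Real.log (g 0) = f 0 := by rw [hfdef]
    rw [hAeq x, hlog0]
    simp only [Pi.sub_apply] at h1
    rw [hB0] at h1
    linarith
  -- nonnegativity of B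
  have hBnn : ∀ x, 0 ≤ B x := by
    intro x
    by_contra hneg
    push_neg at hneg
    have hBx : 0 < -B x := by linarith
    obtain ⟨q, hq⟩ : ∃ z : ℝ, z = b ⬝ᵥ x := ⟨_, rfl⟩
    obtain ⟨t, ht⟩ : ∃ z : ℝ, z = (2*|q|+1)/(-B x) := ⟨_, rfl⟩
    have ht0 : 0 < t := by rw [ht]; positivity
    have hft : ∀ s : ℝ, f (s•x) = (1/2)*(s^2*B x) + s*q + Real.log (g 0) := by
      intro s
      rw [hform (s•x)]
      have e1 : (s•x) ⬝ᵥ (A *ᵥ (s•x)) = s^2*(x ⬝ᵥ (A *ᵥ x)) := by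
        rw [Matrix.mulVec_smul, smul_dotProduct, dotProduct_smul,
          smul_eq_mul, smul_eq_mul]
        ring
      have e2 : b ⬝ᵥ (s•x) = s*q := by
        rw [hq, dotProduct_smul, smul_eq_mul]
      rw [e1, e2, hAeq x]
      try ring
    have hBne : B x ≠ 0 := ne_of_lt hneg
    have h5 : (1/2)*t*(B x) + |q| = -1/2 := by
      rw [ht]; field_simp; ring
    have hlt : ∀ s : ℝ, s = t ∨ s = -t → f (s•x) < Real.log (g 0) := by
      intro s hsor
      have hs2 : s^2 = t^2 := by rcases hsor with hh|hh <;> rw [hh] <;> ring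
      have hsq : s*q ≤ t*|q| := by
        rcases hsor with hh|hh <;> rw [hh]
        · exact mul_le_mul_of_nonneg_left (le_abs_self q) ht0.le
        · rw [show -t*q = t*(-q) by ring]
          exact mul_le_mul_of_nonneg_left (neg_le_abs q) ht0.le
      rw [hft s, hs2]
      nlinarith [h5, ht0]
    have hcvx := hconv.2 (Set.mem_univ (t•x)) (Set.mem_univ ((-t)•x))
      (by norm_num : (0:ℝ) ≤ 1/2) (by norm_num : (0:ℝ) ≤ 1/2) (by norm_num : (1/2:ℝ) + 1/2 = 1)
    rw [show (1/2:ℝ)•(t•x) + (1/2:ℝ)•((-t)•x) = (0: Fin n → ℝ) by module] at hcvx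
    rw [smul_eq_mul, smul_eq_mul] at hcvx
    have g1 : g (t•x) < g 0 := by
      calc g (t•x) = Real.exp (f (t•x)) := (hexpf _).symm
        _ < Real.exp (Real.log (g 0)) := Real.exp_lt_exp.mpr (hlt t (Or.inl rfl))
        _ = g 0 := Real.exp_log (hpos 0)
    have g2 : g ((-t)•x) < g 0 := by
      calc g ((-t)•x) = Real.exp (f ((-t)•x)) := (hexpf _).symm
        _ < Real.exp (Real.log (g 0)) := Real.exp_lt_exp.mpr (hlt (-t) (Or.inr rfl))
        _ = g 0 := Real.exp_log (hpos 0)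
    linarith
  refine ⟨A, b, Real.log (g 0), posSemidef_iff_dotProduct_mulVec.mpr ⟨?_, ?_⟩, ?_⟩
  · apply Matrix.ext
    intro i j
    rw [Matrix.conjTranspose_apply, star_trivial, hAsymm j i]
  · intro x
    rw [star_trivial, hAeq x]
    exact hBnn x
  · intro x
    rw [← hexpf x, hform x]
end

section
/- Let g : ℝⁿ → ℝ be convex and strictly positive, and suppose that for every y the map x ↦ g(x+y)/g(x) is convex. Define g(x;y) = lim_{t↓0} (g(x+ty) − g(x))/t. Then for every x, y this one-sided directional derivative exists and is finite, and for each fixed y the map x ↦ g(x;y)/g(x) is convex. -/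
open Filter

theorem stmt2 {n : ℕ} (g : (Fin n → ℝ) → ℝ)
    (hconv : ConvexOn ℝ Set.univ g) (hpos : ∀ x, 0 < g x)
    (hratio : ∀ y : Fin n → ℝ, ConvexOn ℝ Set.univ (fun x => g (x + y) / g x)) :
    ∃ D : (Fin n → ℝ) → (Fin n → ℝ) → ℝ,
      (∀ x y, Tendsto (fun t : ℝ => (g (x + t • y) - g x) / t)
        (nhdsWithin 0 (Set.Ioi 0)) (nhds (D x y))) ∧
      ∀ y, ConvexOn ℝ Set.univ (fun x => D x y / g x) := by
  classical
  -- convexity of g along lines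
  have hline : ∀ x y : Fin n → ℝ, ConvexOn ℝ Set.univ (fun t : ℝ => g (x + t • y)) := by
    intro x y
    refine ⟨convex_univ, fun a _ b _ μ ν hμ hν hμν => ?_⟩
    have key : x + (μ * a + ν * b) • y = μ • (x + a • y) + ν • (x + b • y) := by
      match_scalars <;> nlinarith [hμν]
    have := hconv.2 (Set.mem_univ (x + a • y)) (Set.mem_univ (x + b • y)) hμ hν hμν
    simpa [smul_eq_mul, key] using this
  -- slope function
  set s : (Fin n → ℝ) → (Fin n → ℝ) → ℝ → ℝ :=
    fun x y t => (g (x + t • y) - g x) / t with hs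
  have hsmono : ∀ x y, MonotoneOn (s x y) (Set.Ioi (0:ℝ)) := by
    intro x y t1 ht1 t2 ht2 h12
    have := (hline x y).secant_mono (Set.mem_univ 0) (Set.mem_univ t1) (Set.mem_univ t2)
      (ne_of_gt ht1) (ne_of_gt ht2) h12
    simpa [hs, sub_zero] using this
  have hbdd : ∀ x y, BddBelow (s x y '' Set.Ioi (0:ℝ)) := by
    intro x y
    refine ⟨s x y (-1), fun v hv => ?_⟩
    obtain ⟨t, ht, rfl⟩ := hv
    have := (hline x y).secant_mono (Set.mem_univ 0) (Set.mem_univ (-1)) (Set.mem_univ t)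
      (by norm_num) (ne_of_gt ht) (by linarith [Set.mem_Ioi.mp ht])
    simpa [hs, sub_zero] using this
  refine ⟨fun x y => sInf (s x y '' Set.Ioi (0:ℝ)), fun x y => ?_, ?_⟩
  · exact (hsmono x y).tendsto_nhdsGT (hbdd x y)
  · intro y
    -- the rescaled difference quotient, tendsto
    have htend : ∀ x, Tendsto (fun t : ℝ => (g (x + t • y) - g x) / (t * g x))
        (nhdsWithin 0 (Set.Ioi 0)) (nhds (sInf (s x y '' Set.Ioi (0:ℝ)) / g x)) := by
      intro x
      have := ((hsmono x y).tendsto_nhdsGT (hbdd x y)).div_const (g x)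
      simpa [hs, div_div] using this
    -- convexity of the rescaled quotient for t > 0
    have hconvt : ∀ t : ℝ, 0 < t →
        ConvexOn ℝ Set.univ (fun x => (g (x + t • y) - g x) / (t * g x)) := by
      intro t ht
      have h1 : ConvexOn ℝ Set.univ (fun x => (1/t) * (g (x + t • y) / g x) - 1/t) := by
        exact ((hratio (t • y)).smul (by positivity)).sub (concaveOn_const (1/t) convex_univ)
      convert h1 using 2 with x
      have hgx := (hpos x).ne'
      field_simp
    refine ⟨convex_univ, fun a _ b _ μ ν hμ hν hμν => ?_⟩
    have hA := htend a
    have hB := htend b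
    have hC := htend (μ • a + ν • b)
    have hev : ∀ᶠ t in nhdsWithin (0:ℝ) (Set.Ioi 0),
        (g ((μ • a + ν • b) + t • y) - g (μ • a + ν • b)) / (t * g (μ • a + ν • b)) ≤
          μ * ((g (a + t • y) - g a) / (t * g a)) + ν * ((g (b + t • y) - g b) / (t * g b)) := by
      filter_upwards [self_mem_nhdsWithin] with t ht
      have := (hconvt t ht).2 (Set.mem_univ a) (Set.mem_univ b) hμ hν hμν
      simpa [smul_eq_mul] using this
    have := le_of_tendsto_of_tendsto hC ((hA.const_mul μ).add (hB.const_mul ν)) hev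
    simpa [smul_eq_mul] using this
end

section
/- Let f : ℝⁿ → ℝ be a positive Borel density (∫ f = 1). If for every y ∈ ℝⁿ the map x ↦ f(x+y)/f(x) is log-concave, then for every y the map x ↦ f(x+y)/f(x) is log-convex. -/
theorem Real.log_div_add_eq_neg_log_div_add_neg {E : Type*} [AddGroup E] (f : E → ℝ) (x y : E) :
    Real.log (f (x + y) / f x) = -Real.log (f (x + y + -y) / f (x + y)) := by
  rw [add_neg_cancel_right, ← Real.log_inv, inv_div]

/-- Writing `g y x = log (f (x + y) / f x)`, one has `g y x = -g (-y) (x + y)`, so the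
log-ratio for the shift `y` is a negated translate of the log-ratio for `-y`. -/
theorem convexOn_log_div_add_of_concaveOn_neg {E : Type*} [AddCommGroup E] [Module ℝ E]
    (f : E → ℝ) (y : E)
    (hconc : ConcaveOn ℝ Set.univ (fun x => Real.log (f (x + -y) / f x))) :
    ConvexOn ℝ Set.univ (fun x => Real.log (f (x + y) / f x)) := by
  have htrans := (hconc.translate_left y).neg
  rw [Set.preimage_univ] at htrans
  have hshift : (fun x => Real.log (f (x + y) / f x)) =
      -((fun x => Real.log (f (x + -y) / f x)) ∘ fun z => z + y) :=
    funext fun x => Real.log_div_add_eq_neg_log_div_add_neg f x y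
  rwa [hshift]

theorem stmt7_general {n : ℕ} (f : (Fin n → ℝ) → ℝ)
    (hlc : ∀ y : Fin n → ℝ,
      ConcaveOn ℝ Set.univ (fun x => Real.log (f (x + y) / f x))) :
    ∀ y : Fin n → ℝ,
      ConvexOn ℝ Set.univ (fun x => Real.log (f (x + y) / f x)) :=
  fun y => convexOn_log_div_add_of_concaveOn_neg f y (hlc (-y))

theorem stmt7 {n : ℕ} (f : (Fin n → ℝ) → ℝ)
    (hmeas : Measurable f) (hpos : ∀ x, 0 < f x)
    (hint : ∫ x, f x = 1)
    (hlc : ∀ y : Fin n → ℝ,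
      ConcaveOn ℝ Set.univ (fun x => Real.log (f (x + y) / f x))) :
    ∀ y : Fin n → ℝ,
      ConvexOn ℝ Set.univ (fun x => Real.log (f (x + y) / f x)) :=
  stmt7_general f hlc
end

section
/- Let f : ℝⁿ → ℝ be a positive Borel density. If for every y ∈ ℝⁿ the map x ↦ f(x+y)/f(x) is convex, then x ↦ 1/f(x) is convex on ℝⁿ. -/
/-! Translation invariance of Lebesgue measure gives `∫ f (x + y) / f x dy = (∫ f) / f x`,
and an integral of convex functions of `x` is convex. -/

open MeasureTheory

theorem convexOn_integral_div_of_convexOn_translate_div {G : Type*} [MeasurableSpace G]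
    [AddCommGroup G] [Module ℝ G] [MeasurableAdd G] {μ : Measure G} [μ.IsAddLeftInvariant]
    {f : G → ℝ} {s : Set G} (hf : Integrable f μ) (hs : Convex ℝ s)
    (hconv : ∀ y, ConvexOn ℝ s fun x => f (x + y) / f x) :
    ConvexOn ℝ s fun x => (∫ y, f y ∂μ) / f x := by
  have h := integral_convexOn_of_integrand_ae (μ := μ) (f := fun y x => f (x + y) / f x) hs
    (ae_of_all _ hconv) fun x _ => (hf.comp_add_left x).div_const (f x)
  simpa only [integral_div, integral_add_left_eq_self] using h

theorem stmt8_general {n : ℕ} (f : (Fin n → ℝ) → ℝ)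
    (hint : ∫ x, f x = 1)
    (hconv : ∀ y : Fin n → ℝ, ConvexOn ℝ Set.univ (fun x => f (x + y) / f x)) :
    ConvexOn ℝ Set.univ (fun x => (f x)⁻¹) := by
  simpa only [hint, one_div] using
    convexOn_integral_div_of_convexOn_translate_div (integrable_of_integral_eq_one hint)
      convex_univ hconv

theorem stmt8 {n : ℕ} (f : (Fin n → ℝ) → ℝ)
    (hmeas : Measurable f) (hpos : ∀ x, 0 < f x)
    (hint : ∫ x, f x = 1)
    (hconv : ∀ y : Fin n → ℝ, ConvexOn ℝ Set.univ (fun x => f (x + y) / f x)) :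
    ConvexOn ℝ Set.univ (fun x => (f x)⁻¹) :=
  stmt8_general f hint hconv
end

section
/- Let f : ℝⁿ → ℝ be a positive Borel density. Then the following are equivalent: (i) x ↦ f(x+y)/f(x) is convex for every y; (ii) x ↦ f(x+y)/f(x) is log-convex for every y; (iii) x ↦ f(x+y)/f(x) is log-concave for every y; (iv) f is a multivariate normal density with positive definite covariance matrix. -/
open MeasureTheory Matrix

/-- The multivariate normal density with mean `μ` and covariance `S`. -/
noncomputable def gaussianDensityFun {n : ℕ} (μ : Fin n → ℝ)
    (S : Matrix (Fin n) (Fin n) ℝ) (x : Fin n → ℝ) : ℝ :=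
  (Real.sqrt ((2 * Real.pi) ^ n * S.det))⁻¹ *
    Real.exp (-((1 / 2) * ((x - μ) ⬝ᵥ (S⁻¹ *ᵥ (x - μ)))))

open Set Real Pointwise

variable {n : ℕ}

local notation "E" => Fin n → ℝ

section ConvexHelpers

lemma convexOn_translate {F : E → ℝ} (h : ConvexOn ℝ Set.univ F) (c : E) :
    ConvexOn ℝ Set.univ fun x => F (x + c) := by
  refine ⟨convex_univ, fun x _ z _ a b ha hb hab => ?_⟩
  have key : (a • x + b • z) + c = a • (x + c) + b • (z + c) := by
    have h1 : a • c + b • c = c := by rw [← add_smul, hab, one_smul]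
    calc (a • x + b • z) + c = a • x + b • z + (a • c + b • c) := by rw [h1]
      _ = a • (x + c) + b • (z + c) := by rw [smul_add, smul_add]; abel
  calc F ((a • x + b • z) + c) = F (a • (x + c) + b • (z + c)) := by rw [key]
    _ ≤ a • F (x + c) + b • F (z + c) :=
        h.2 (Set.mem_univ (x + c)) (Set.mem_univ (z + c)) ha hb hab

lemma convexOn_exp_comp {F : E → ℝ} (h : ConvexOn ℝ Set.univ F) :
    ConvexOn ℝ Set.univ fun x => Real.exp (F x) := by
  refine ⟨convex_univ, fun x _ z _ a b ha hb hab => ?_⟩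
  calc Real.exp (F (a • x + b • z)) ≤ Real.exp (a * F x + b * F z) := by
        have := h.2 (Set.mem_univ x) (Set.mem_univ z) ha hb hab
        exact Real.exp_le_exp.2 (by simpa using this)
    _ ≤ a * Real.exp (F x) + b * Real.exp (F z) := by
        have := convexOn_exp.2 (Set.mem_univ (F x)) (Set.mem_univ (F z)) ha hb hab
        simpa using this

lemma convexOn_line {F : E → ℝ} (h : ConvexOn ℝ Set.univ F) (a y : E) :
    ConvexOn ℝ Set.univ fun t : ℝ => F (a + t • y) := by
  refine ⟨convex_univ, fun s _ t _ p q hp hq hpq => ?_⟩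
  have key : a + (p • s + q • t) • y = p • (a + s • y) + q • (a + t • y) := by
    have h1 : p • a + q • a = a := by rw [← add_smul, hpq, one_smul]
    calc a + (p • s + q • t) • y = (p • a + q • a) + (p • s + q • t) • y := by rw [h1]
      _ = p • (a + s • y) + q • (a + t • y) := by
          rw [smul_add, smul_add, add_smul, smul_smul, smul_smul, smul_eq_mul, smul_eq_mul]
          abel
  calc F (a + (p • s + q • t) • y) = F (p • (a + s • y) + q • (a + t • y)) := by rw [key]
    _ ≤ p • F (a + s • y) + q • F (a + t • y) :=
        h.2 (Set.mem_univ (a + s • y)) (Set.mem_univ (a + t • y)) hp hq hpq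

/-- one-sided midpoint bound from convexity of `exp ∘ K`. -/
lemma midpoint_bound {K : E → ℝ} (hF : ConvexOn ℝ Set.univ fun x => Real.exp (K x))
    (a b : E) :
    K ((1/2 : ℝ) • (a + b)) - (K a + K b)/2 ≤ (K a - K b)^2/8 := by
  have h2 := hF.2 (Set.mem_univ a) (Set.mem_univ b) (by norm_num : (0:ℝ) ≤ 1/2)
    (by norm_num : (0:ℝ) ≤ 1/2) (by norm_num)
  have hsm : (1/2 : ℝ) • a + (1/2 : ℝ) • b = (1/2 : ℝ) • (a + b) := (smul_add _ _ _).symm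
  rw [hsm] at h2
  have h2' : Real.exp (K ((1/2 : ℝ) • (a + b))) ≤
      (1/2 : ℝ) * Real.exp (K a) + 1/2 * Real.exp (K b) := by simpa using h2
  have key : Real.exp (K ((1/2 : ℝ) • (a + b))) ≤
      Real.exp ((K a + K b)/2 + (K a - K b)^2/8) := by
    refine le_trans h2' ?_
    have hco : (1/2 : ℝ) * Real.exp (K a) + 1/2 * Real.exp (K b)
        = Real.exp ((K a + K b)/2) * Real.cosh ((K a - K b)/2) := by
      rw [Real.cosh_eq, ← mul_div_assoc, mul_add, ← Real.exp_add, ← Real.exp_add]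
      ring_nf
    rw [hco, Real.exp_add]
    refine mul_le_mul_of_nonneg_left ?_ (Real.exp_nonneg _)
    refine (Real.cosh_le_exp_half_sq _).trans ?_
    rw [Real.exp_le_exp]
    ring_nf
    exact le_refl _
  have := Real.exp_le_exp.1 key
  linarith

/-- log of a positive convex function on `ℝ` is Lipschitz on `[0,1]`. -/
lemma loglip {h : ℝ → ℝ} (hconv : ConvexOn ℝ Set.univ h) (hpos : ∀ t, 0 < h t) :
    ∃ L : ℝ, 0 ≤ L ∧ ∀ s t : ℝ, s ∈ Set.Icc (0:ℝ) 1 → t ∈ Set.Icc (0:ℝ) 1 →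
      |Real.log (h t) - Real.log (h s)| ≤ L * |t - s| := by
  have hcont : Continuous h := hconv.locallyLipschitz.continuous
  obtain ⟨M, hM⟩ := (isCompact_Icc (a := (-3:ℝ)) (b := 3)).exists_bound_of_continuousOn
    hcont.continuousOn
  have hball : ∀ aa : ℝ, dist aa (0:ℝ) < 3 → |h aa| ≤ M := by
    intro aa haa
    have h1 : |aa| < 3 := by simpa [Real.dist_eq] using haa
    have := abs_lt.1 h1
    simpa using hM aa ⟨by linarith [this.1], by linarith [this.2]⟩
  have hlip : LipschitzOnWith (2 * M / 1).toNNReal h (Metric.ball (0:ℝ) (3 - 1)) :=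
    (hconv.subset (Set.subset_univ _) (convex_ball _ _)).lipschitzOnWith_of_abs_le
      one_pos hball
  obtain ⟨t₀, ht₀, hmin⟩ := (isCompact_Icc (a := (0:ℝ)) (b := 1)).exists_isMinOn
    (Set.nonempty_Icc.2 zero_le_one) hcont.continuousOn
  set m := h t₀ with hm
  have hmpos : 0 < m := hpos t₀
  set C : ℝ := ((2 * M / 1).toNNReal : ℝ) with hC
  have hC0 : 0 ≤ C := (2 * M / 1).toNNReal.coe_nonneg
  refine ⟨C / m, by positivity, fun s t hs ht => ?_⟩
  have hmem : ∀ u : ℝ, u ∈ Set.Icc (0:ℝ) 1 → u ∈ Metric.ball (0:ℝ) (3 - 1) := by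
    intro u hu
    simp only [Metric.mem_ball, Real.dist_eq, sub_zero]
    rw [abs_lt]; constructor <;> [linarith [hu.1]; linarith [hu.2]]
  have hdist : |h t - h s| ≤ C * |t - s| := by
    have := hlip.dist_le_mul t (hmem t ht) s (hmem s hs)
    simpa [Real.dist_eq, hC] using this
  have hms : m ≤ h s := hmin hs
  have hmt : m ≤ h t := hmin ht
  have base : ∀ x y : ℝ, 0 < y → y ≤ x → m ≤ y → Real.log x - Real.log y ≤ (x - y)/m := by
    intro x y hy hxy hmy
    have hx : 0 < x := lt_of_lt_of_le hy hxy
    have h1 : Real.log x - Real.log y = Real.log (x / y) := (Real.log_div hx.ne' hy.ne').symm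
    rw [h1]
    have h2 : Real.log (x / y) ≤ x / y - 1 := Real.log_le_sub_one_of_pos (by positivity)
    have h3 : x / y - 1 = (x - y) / y := by field_simp
    have h4 : (x - y) / y ≤ (x - y) / m := by gcongr
    linarith
  have habs : |Real.log (h t) - Real.log (h s)| ≤ |h t - h s| / m := by
    rcases le_total (h s) (h t) with hle | hle
    · have hb := base (h t) (h s) (hpos s) hle hms
      have hnn : 0 ≤ Real.log (h t) - Real.log (h s) := by
        have := Real.log_le_log (hpos s) hle
        linarith
      rw [abs_of_nonneg hnn, abs_of_nonneg (by linarith : (0:ℝ) ≤ h t - h s)]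
      exact hb
    · have hb := base (h s) (h t) (hpos t) hle hmt
      have hnp : Real.log (h t) - Real.log (h s) ≤ 0 := by
        have := Real.log_le_log (hpos t) hle
        linarith
      rw [abs_of_nonpos hnp, abs_of_nonpos (by linarith : h t - h s ≤ 0)]
      have : -(h t - h s) = h s - h t := by ring
      rw [this]
      have : -(Real.log (h t) - Real.log (h s)) = Real.log (h s) - Real.log (h t) := by ring
      rw [this]
      exact hb
  calc |Real.log (h t) - Real.log (h s)| ≤ |h t - h s| / m := habs
    _ ≤ (C * |t - s|) / m := by gcongr
    _ = C / m * |t - s| := by ring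

end ConvexHelpers


lemma midpoint_eq {g : E → ℝ}
    (H : ∀ y : E, ConvexOn ℝ Set.univ fun x => Real.exp (g (x + y) - g x))
    (y a b : E) :
    g ((1/2:ℝ) • (a + b) + y) - g ((1/2:ℝ) • (a + b)) =
      ((g (a + y) - g a) + (g (b + y) - g b)) / 2 := by
  classical
  set K : E → E → ℝ := fun y x => g (x + y) - g x with hK
  have Hneg : ∀ y : E, ConvexOn ℝ Set.univ fun x => Real.exp (-(K y x)) := by
    intro y
    have h1 := convexOn_translate (H (-y)) y
    have : (fun x => Real.exp (g ((x + y) + -y) - g (x + y))) =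
        fun x => Real.exp (-(K y x)) := by
      funext x
      simp [hK, add_neg_cancel_right]
    rwa [this] at h1
  have both : ∀ (z aa bb : E),
      |K z ((1/2:ℝ) • (aa + bb)) - (K z aa + K z bb)/2| ≤ (K z aa - K z bb)^2/8 := by
    intro z aa bb
    rw [abs_le]
    constructor
    · have := midpoint_bound (K := fun x => -(K z x)) (Hneg z) aa bb
      have h2 : (-(K z aa) - -(K z bb))^2 = (K z aa - K z bb)^2 := by ring
      rw [h2] at this
      linarith
    · exact midpoint_bound (K := K z) (H z) aa bb
  -- fix the data
  set m : E := (1/2:ℝ) • (a + b) with hm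
  set w : E := b - a with hw
  -- the 1-d convex function along the segment
  have hline : ConvexOn ℝ Set.univ fun t : ℝ => Real.exp (K w (a + t • y)) :=
    convexOn_line (F := fun x => Real.exp (g (x + w) - g x)) (H w) a y
  obtain ⟨L, hL0, hLip⟩ := loglip hline (fun t => Real.exp_pos _)
  set φ : ℝ → ℝ := fun t => K w (a + t • y) with hφ
  have hφlog : ∀ t, Real.log (Real.exp (K w (a + t • y))) = φ t := by
    intro t; rw [Real.log_exp]
  have hLipφ : ∀ s t : ℝ, s ∈ Set.Icc (0:ℝ) 1 → t ∈ Set.Icc (0:ℝ) 1 →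
      |φ t - φ s| ≤ L * |t - s| := by
    intro s t hs ht
    have := hLip s t hs ht
    rwa [hφlog, hφlog] at this
  set D : ℝ := K y m - (K y a + K y b)/2 with hD
  -- the subdivision bound
  have key : ∀ k : ℕ, 1 ≤ k → |D| ≤ L^2/(8*k) := by
    intro k hk
    have hk0 : (0:ℝ) < k := by exact_mod_cast hk
    set yk : E := ((k:ℝ))⁻¹ • y with hyk
    set P : E → ℕ → E := fun x j => x + ((j:ℝ)/k) • y with hP
    have hPsucc : ∀ x j, P x (j+1) = P x j + yk := by
      intro x j
      simp only [hP, hyk]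
      rw [add_assoc]
      congr 1
      rw [← add_smul]
      congr 1
      push_cast
      field_simp
    have htel : ∀ x : E, K y x = ∑ j ∈ Finset.range k, K yk (P x j) := by
      intro x
      have h1 : ∀ j ∈ Finset.range k, K yk (P x j) = g (P x (j+1)) - g (P x j) := by
        intro j _
        rw [hPsucc x j]
      rw [Finset.sum_congr rfl h1, Finset.sum_range_sub (fun j => g (P x j)) k]
      have hPk : P x k = x + y := by
        simp only [hP]
        congr 1
        rw [div_self hk0.ne', one_smul]
      have hP0 : P x 0 = x := by simp [hP]
      rw [hPk, hP0]
    have hmid : ∀ j : ℕ, P m j = (1/2:ℝ) • (P a j + P b j) := by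
      intro j
      simp only [hP, hm]
      module
    have hDsum : D = ∑ j ∈ Finset.range k,
        (K yk (P m j) - (K yk (P a j) + K yk (P b j))/2) := by
      rw [hD, htel m, htel a, htel b, ← Finset.sum_add_distrib, Finset.sum_div,
        ← Finset.sum_sub_distrib]
    have hterm : ∀ j ∈ Finset.range k,
        |K yk (P m j) - (K yk (P a j) + K yk (P b j))/2| ≤ (L/k)^2/8 := by
      intro j hj
      have hj' : j < k := Finset.mem_range.1 hj
      have h1 := both yk (P a j) (P b j)
      rw [← hmid j] at h1
      refine h1.trans ?_
      -- bound the square of the increment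
      have hdiff : K yk (P a j) - K yk (P b j) = φ ((j:ℝ)/k) - φ (((j:ℝ)+1)/k) := by
        have hPb : ∀ j : ℕ, P b j = P a j + w := by
          intro j; simp only [hP, hw]; abel
        have hφval : ∀ j : ℕ, φ ((j:ℝ)/k) = g (P b j) - g (P a j) := by
          intro j
          have h1 : a + ((j:ℝ)/k) • y + w = P b j := by simp only [hP, hw]; abel
          have h2 : a + ((j:ℝ)/k) • y = P a j := by simp only [hP]
          simp only [hφ, hK]
          rw [h1, h2]
        have e1 : K yk (P a j) = g (P a (j+1)) - g (P a j) := by rw [hPsucc a j]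
        have e2 : K yk (P b j) = g (P b (j+1)) - g (P b j) := by rw [hPsucc b j]
        have e3 : φ (((j:ℝ)+1)/k) = g (P b (j+1)) - g (P a (j+1)) := by
          have := hφval (j+1)
          push_cast at this
          exact this
        rw [e1, e2, hφval j, e3]
        ring
      have hsq : (K yk (P a j) - K yk (P b j))^2 ≤ (L/k)^2 := by
        rw [hdiff]
        have hmem1 : (j:ℝ)/k ∈ Set.Icc (0:ℝ) 1 := by
          constructor
          · positivity
          · rw [div_le_one hk0]
            exact_mod_cast hj'.le
        have hmem2 : ((j:ℝ)+1)/k ∈ Set.Icc (0:ℝ) 1 := by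
          constructor
          · positivity
          · rw [div_le_one hk0]
            exact_mod_cast hj'
        have hb := hLipφ (((j:ℝ)+1)/k) ((j:ℝ)/k) hmem2 hmem1
        have habs : |(j:ℝ)/k - ((j:ℝ)+1)/k| = 1/k := by
          rw [div_sub_div_same, show (j:ℝ) - ((j:ℝ)+1) = -1 by ring]
          rw [abs_div, abs_neg, abs_one, abs_of_pos hk0]
        rw [habs] at hb
        have h5 : |φ ((j:ℝ)/k) - φ (((j:ℝ)+1)/k)| ≤ L * (1/k) := hb
        calc (φ ((j:ℝ)/k) - φ (((j:ℝ)+1)/k))^2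
            = |φ ((j:ℝ)/k) - φ (((j:ℝ)+1)/k)|^2 := (sq_abs _).symm
          _ ≤ (L * (1/k))^2 := by
              apply pow_le_pow_left₀ (abs_nonneg _) h5
          _ = (L/k)^2 := by ring
      linarith [hsq]
    calc |D| ≤ ∑ j ∈ Finset.range k,
          |K yk (P m j) - (K yk (P a j) + K yk (P b j))/2| := by
          rw [hDsum]; exact Finset.abs_sum_le_sum_abs _ _
      _ ≤ ∑ _j ∈ Finset.range k, (L/k)^2/8 := Finset.sum_le_sum hterm
      _ = k * ((L/k)^2/8) := by rw [Finset.sum_const, Finset.card_range, nsmul_eq_mul]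
      _ = L^2/(8*k) := by field_simp
  -- conclude D = 0
  have hD0 : D = 0 := by
    by_contra hne
    have habs : 0 < |D| := abs_pos.2 hne
    obtain ⟨k, hkgt⟩ := exists_nat_gt (L^2/(8*|D|))
    set k' : ℕ := max k 1 with hk'
    have hk1 : 1 ≤ k' := le_max_right _ _
    have hkk : (k:ℝ) ≤ k' := by exact_mod_cast le_max_left _ _
    have hb := key k' hk1
    have hk'0 : (0:ℝ) < k' := by exact_mod_cast hk1
    have : L^2/(8*|D|) < k' := lt_of_lt_of_le hkgt hkk
    have h8 : L^2 < 8 * |D| * (k':ℝ) := by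
      have h8D : (0:ℝ) < 8*|D| := by positivity
      calc L^2 = (L^2/(8*|D|)) * (8*|D|) := by field_simp
        _ < (k':ℝ) * (8*|D|) := by
            apply mul_lt_mul_of_pos_right this h8D
        _ = 8 * |D| * (k':ℝ) := by ring
    have : |D| ≤ L^2/(8*k') := hb
    rw [le_div_iff₀ (by positivity : (0:ℝ) < 8*k')] at this
    nlinarith
  have : K y m = (K y a + K y b)/2 := by
    have := hD0
    simp only [hD] at this
    linarith
  simpa [hK, hm] using this


/-- a measurable additive function on `ℝⁿ` is continuous. -/
lemma continuous_of_additive_of_measurable {ℓ : E → ℝ}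
    (hadd : ∀ x y : E, ℓ (x + y) = ℓ x + ℓ y) (hmeas : Measurable ℓ) :
    Continuous ℓ := by
  classical
  set φ : E →+ ℝ := AddMonoidHom.mk' ℓ (fun x y => hadd x y) with hφ
  -- find a set of positive measure where ℓ is bounded
  have hcover : (Metric.ball (0:E) 1) ⊆ ⋃ k : ℕ, {x ∈ Metric.ball (0:E) 1 | |ℓ x| ≤ k} := by
    intro x hx
    obtain ⟨k, hk⟩ := exists_nat_ge |ℓ x|
    exact Set.mem_iUnion.2 ⟨k, hx, hk⟩
  have hballpos : 0 < volume (Metric.ball (0:E) 1) := Metric.measure_ball_pos _ _ one_pos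
  have hexk : ∃ k : ℕ, 0 < volume {x ∈ Metric.ball (0:E) 1 | |ℓ x| ≤ k} := by
    by_contra hcon
    push_neg at hcon
    simp only [le_zero_iff] at hcon
    have : volume (⋃ k : ℕ, {x ∈ Metric.ball (0:E) 1 | |ℓ x| ≤ k}) = 0 :=
      measure_iUnion_null hcon
    have := measure_mono hcover |>.trans this.le
    exact absurd (le_antisymm this zero_le) hballpos.ne'
  obtain ⟨k, hk⟩ := hexk
  set S : Set E := {x ∈ Metric.ball (0:E) 1 | |ℓ x| ≤ k} with hS
  have hSmeas : MeasurableSet S := by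
    apply MeasurableSet.inter
    · exact measurableSet_ball
    · exact measurableSet_le (hmeas.abs) measurable_const
  -- Steinhaus
  have hSt : S - S ∈ nhds (0:E) :=
    MeasureTheory.Measure.sub_mem_nhds_zero_of_addHaar_pos volume S hSmeas hk
  have hbound : ∀ z ∈ S - S, |ℓ z| ≤ 2*k := by
    rintro z ⟨u, hu, v, hv, rfl⟩
    have : ℓ (u - v) = ℓ u - ℓ v := by
      have h1 : ℓ (u - v) + ℓ v = ℓ u := by rw [← hadd]; congr 1; abel
      linarith
    rw [this]
    calc |ℓ u - ℓ v| ≤ |ℓ u| + |ℓ v| := abs_sub _ _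
      _ ≤ k + k := add_le_add hu.2 hv.2
      _ = 2*k := by ring
  -- continuity at 0
  have hat0 : Filter.Tendsto ℓ (nhds 0) (nhds 0) := by
    rw [Metric.tendsto_nhds]
    intro ε hε
    obtain ⟨N, hN⟩ := exists_nat_gt ((2*k)/ε)
    have hN1 : 1 ≤ N := by
      by_contra hc
      push_neg at hc
      interval_cases N
      · simp at hN
        nlinarith [div_nonneg (by positivity : (0:ℝ) ≤ 2*k) hε.le]
    have hNpos : (0:ℝ) < N := by exact_mod_cast hN1
    have hV : (fun x : E => (N:ℝ) • x) ⁻¹' (S - S) ∈ nhds (0:E) := by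
      apply ContinuousAt.preimage_mem_nhds
      · exact (continuous_const_smul _).continuousAt
      · simpa using hSt
    filter_upwards [hV] with x hx
    have hmem : (N:ℝ) • x ∈ S - S := hx
    have hsmul : ℓ ((N:ℝ) • x) = N * ℓ x := by
      have h1 : (N:ℝ) • x = (N : ℕ) • x := by
        rw [Nat.cast_smul_eq_nsmul]
      rw [h1]
      have := φ.map_nsmul N x
      simpa [hφ, nsmul_eq_mul] using this
    have := hbound _ hmem
    rw [hsmul, abs_mul, abs_of_pos hNpos] at this
    have hlx : |ℓ x| ≤ (2*k)/N := by
      rw [le_div_iff₀ hNpos]; linarith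
    have hkN : (2*(k:ℝ)) < N * ε := by
      have := (div_lt_iff₀ hε).1 hN
      linarith
    have : (2*(k:ℝ))/(N:ℝ) < ε := by
      rw [div_lt_iff₀ hNpos]
      linarith
    simp only [Real.dist_eq, sub_zero]
    calc |ℓ x| ≤ (2*k)/N := hlx
      _ < ε := this
  -- continuity everywhere
  rw [continuous_iff_continuousAt]
  intro x₀
  have heq : ℓ = fun x => ℓ (x - x₀) + ℓ x₀ := by
    funext x
    rw [← hadd]; congr 1; abel
  rw [ContinuousAt, heq]
  have h1 : Filter.Tendsto (fun x : E => x - x₀) (nhds x₀) (nhds 0) := by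
    have hc : Continuous (fun x : E => x - x₀) := continuous_id.sub continuous_const
    have := hc.tendsto x₀
    simpa using this
  have h2 : Filter.Tendsto (fun x => ℓ (x - x₀)) (nhds x₀) (nhds 0) := hat0.comp h1
  have h3 := h2.add_const (ℓ x₀)
  have hl0 : ℓ 0 = 0 := by
    have := hadd 0 0
    simpa using this.symm
  simpa [hl0] using h3


lemma dot_symm {A : Matrix (Fin n) (Fin n) ℝ} (hA : A.IsHermitian) (a b : E) :
    a ⬝ᵥ (A *ᵥ b) = b ⬝ᵥ (A *ᵥ a) := by
  have hAt : Aᵀ = A := by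
    ext i j
    have := congrFun (congrFun hA i) j
    simpa [Matrix.conjTranspose_apply] using this
  rw [Matrix.dotProduct_mulVec, ← Matrix.mulVec_transpose, hAt, dotProduct_comm]

lemma cov_exists {A : Matrix (Fin n) (Fin n) ℝ} (hA : A.IsHermitian) :
    ∃ (U : Matrix (Fin n) (Fin n) ℝ) (e : (Fin n → ℝ) ≃ᵐ (Fin n → ℝ)),
      MeasurePreserving (⇑e) volume volume ∧ (∀ y, e y = U *ᵥ y) ∧
      (∀ y : E, (U *ᵥ y) ⬝ᵥ (A *ᵥ (U *ᵥ y)) = ∑ i, hA.eigenvalues i * y i ^ 2) := by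
  classical
  set U : Matrix (Fin n) (Fin n) ℝ := (hA.eigenvectorUnitary : Matrix (Fin n) (Fin n) ℝ) with hU
  have hmem := hA.eigenvectorUnitary.2
  have hstar1 : star U * U = 1 := by
    exact (Matrix.mem_unitaryGroup_iff').mp hmem
  have hstar2 : U * star U = 1 := by
    exact (Matrix.mem_unitaryGroup_iff).mp hmem
  have hinv : Invertible U := ⟨star U, hstar1, hstar2⟩
  have hdet2 : U.det * U.det = 1 := by
    have h1 := congrArg Matrix.det hstar1
    rw [Matrix.det_mul, Matrix.det_one] at h1
    have hstarT : star U = Uᵀ := rfl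
    rwa [hstarT, Matrix.det_transpose] at h1
  have hdetne : U.det ≠ 0 := by
    intro h
    rw [h, mul_zero] at hdet2
    exact zero_ne_one hdet2
  have habsdet : |U.det| = 1 := by
    rcases mul_self_eq_one_iff.1 hdet2 with h | h
    · rw [h]; exact abs_one
    · rw [h]; simp
  -- the linear equivalence
  set eL : (Fin n → ℝ) ≃ₗ[ℝ] (Fin n → ℝ) := U.toLinearEquiv' hinv with heL
  have heLcoe : ∀ y, eL y = U *ᵥ y := by
    intro y
    have : (eL : (Fin n → ℝ) →ₗ[ℝ] (Fin n → ℝ)) = Matrix.toLin' U :=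
      Matrix.toLinearEquiv'_apply U hinv
    calc eL y = (eL : (Fin n → ℝ) →ₗ[ℝ] (Fin n → ℝ)) y := rfl
      _ = Matrix.toLin' U y := by rw [this]
      _ = U *ᵥ y := Matrix.toLin'_apply U y
  set eC : (Fin n → ℝ) ≃L[ℝ] (Fin n → ℝ) := eL.toContinuousLinearEquiv with heC
  set e : (Fin n → ℝ) ≃ᵐ (Fin n → ℝ) := eC.toHomeomorph.toMeasurableEquiv with he
  have hecoe : ∀ y, e y = U *ᵥ y := fun y => heLcoe y
  have hmap : Measure.map (⇑e) volume = volume := by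
    have hfun : (⇑e) = ⇑(Matrix.toLin' U) := by
      funext y
      rw [hecoe y, Matrix.toLin'_apply]
    rw [hfun]
    have hdetlin : LinearMap.det (Matrix.toLin' U) = U.det := LinearMap.det_toLin' U
    rw [Real.map_linearMap_volume_pi_eq_smul_volume_pi (by rw [hdetlin]; exact hdetne)]
    rw [hdetlin]
    rw [abs_inv, habsdet]
    simp
  refine ⟨U, e, ⟨e.measurable, hmap⟩, hecoe, fun y => ?_⟩
  -- quadratic form identity
  have hdiag : star U * A * U = Matrix.diagonal (RCLike.ofReal ∘ hA.eigenvalues) := by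
    have := hA.conjStarAlgAut_star_eigenvectorUnitary
    simpa [Unitary.conjStarAlgAut_apply, hU] using this
  have hquad : (U *ᵥ y) ⬝ᵥ (A *ᵥ (U *ᵥ y)) = y ᵥ* (star U * A * U) ⬝ᵥ y := by
    rw [Matrix.mulVec_mulVec, Matrix.dotProduct_mulVec]
    have h1 : U *ᵥ y = y ᵥ* Uᵀ := (Matrix.vecMul_transpose U y).symm
    rw [h1, Matrix.vecMul_vecMul]
    have h2 : Uᵀ * (A * U) = star U * A * U := by
      rw [Matrix.mul_assoc]; rfl
    rw [h2]
  rw [hquad, hdiag]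
  have hof : (RCLike.ofReal ∘ hA.eigenvalues : Fin n → ℝ) = hA.eigenvalues := by
    funext i; simp
  rw [hof]
  rw [dotProduct]
  apply Finset.sum_congr rfl
  intro i _
  rw [Matrix.vecMul_diagonal]
  ring


lemma sqrt_prod {ι : Type*} (s : Finset ι) (a : ι → ℝ) (h : ∀ i ∈ s, 0 ≤ a i) :
    ∏ i ∈ s, Real.sqrt (a i) = Real.sqrt (∏ i ∈ s, a i) := by
  classical
  induction s using Finset.cons_induction with
  | empty => simp
  | cons i s his ih =>
    rw [Finset.prod_cons, Finset.prod_cons, ih (fun j hj => h j (Finset.mem_cons_of_mem hj)),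
      ← Real.sqrt_mul (h i (Finset.mem_cons_self i s))]

lemma not_integrable_of_eig_nonneg (c₀ : ℝ) (c lam : Fin n → ℝ) (j : Fin n) (hj : 0 ≤ lam j) :
    ¬ Integrable (fun y : E => Real.exp (c₀ + ∑ i, (c i * y i + lam i / 2 * y i ^ 2))) volume := by
  classical
  intro hInt
  have hlt := hInt.lintegral_lt_top
  set s : Fin n → Set ℝ := fun i =>
    if i = j then (if 0 ≤ c j then Set.Ici 0 else Set.Iic 0) else Set.Icc 0 1 with hs
  set S : Set E := Set.univ.pi s with hSdef
  have hSmeas : MeasurableSet S := by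
    apply MeasurableSet.univ_pi
    intro i
    by_cases hij : i = j <;> simp [hs, hij] <;> split <;> measurability
  set m₀ : ℝ := Real.exp (c₀ - ∑ i, (|c i| + |lam i|/2)) with hm₀
  have hm₀pos : 0 < m₀ := Real.exp_pos _
  have hlow : ∀ y ∈ S, m₀ ≤ Real.exp (c₀ + ∑ i, (c i * y i + lam i / 2 * y i ^ 2)) := by
    intro y hy
    rw [hm₀, Real.exp_le_exp]
    have hterm : ∀ i, -(|c i| + |lam i|/2) ≤ c i * y i + lam i / 2 * y i ^ 2 := by
      intro i
      have hyi := hy i (Set.mem_univ i)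
      by_cases hij : i = j
      · subst hij
        simp only [hs, if_pos rfl] at hyi
        by_cases hcj : 0 ≤ c i
        · rw [if_pos hcj] at hyi
          have h1 : (0:ℝ) ≤ y i := hyi
          have h2 : 0 ≤ c i * y i := mul_nonneg hcj h1
          have h3 : 0 ≤ lam i / 2 * y i ^ 2 := by positivity
          have h4 : (0:ℝ) ≤ |c i| + |lam i|/2 := by positivity
          linarith
        · rw [if_neg hcj] at hyi
          push_neg at hcj
          have h1 : y i ≤ 0 := hyi
          have h2 : 0 ≤ c i * y i := by nlinarith
          have h3 : 0 ≤ lam i / 2 * y i ^ 2 := by positivity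
          have h4 : (0:ℝ) ≤ |c i| + |lam i|/2 := by positivity
          linarith
      · simp only [hs, if_neg hij] at hyi
        obtain ⟨h0, h1⟩ := hyi
        have hy2 : y i ^ 2 ≤ 1 := by nlinarith
        have hb1 : -(|c i|) ≤ c i * y i := by
          have := abs_mul (c i) (y i) ▸ neg_abs_le (c i * y i)
          have habs : |c i * y i| ≤ |c i| := by
            rw [abs_mul]
            calc |c i| * |y i| ≤ |c i| * 1 := by
                  apply mul_le_mul_of_nonneg_left _ (abs_nonneg _)
                  rw [abs_le]; constructor <;> linarith
              _ = |c i| := mul_one _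
          linarith [neg_abs_le (c i * y i)]
        have hb2 : -(|lam i|/2) ≤ lam i / 2 * y i ^ 2 := by
          have habs : |lam i / 2 * y i ^ 2| ≤ |lam i|/2 := by
            rw [abs_mul, abs_div]
            have h1 : |y i ^ 2| ≤ 1 := by
              rw [abs_of_nonneg (sq_nonneg _)]; exact hy2
            calc |lam i|/|2| * |y i ^ 2| ≤ |lam i|/|2| * 1 := by
                  apply mul_le_mul_of_nonneg_left h1 (by positivity)
              _ = |lam i|/2 := by rw [mul_one]; norm_num
          linarith [neg_abs_le (lam i / 2 * y i ^ 2)]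
        linarith
    have hsum := Finset.sum_le_sum (fun i (_ : i ∈ Finset.univ) => hterm i)
    have hneg : ∑ i, -(|c i| + |lam i|/2) = -∑ i, (|c i| + |lam i|/2) := by
      rw [Finset.sum_neg_distrib]
    rw [hneg] at hsum
    linarith
  have hvol : volume S = ⊤ := by
    rw [hSdef, volume_pi_pi]
    rw [← Finset.mul_prod_erase Finset.univ (fun i => volume (s i)) (Finset.mem_univ j)]
    have h1 : ∏ i ∈ Finset.univ.erase j, volume (s i) = 1 := by
      apply Finset.prod_eq_one
      intro i hi
      have hij : i ≠ j := Finset.ne_of_mem_erase hi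
      simp [hs, hij, Real.volume_Icc]
    have h2 : volume (s j) = ⊤ := by
      simp only [hs, if_pos rfl]
      split
      · exact Real.volume_Ici
      · exact Real.volume_Iic
    rw [h1, h2, mul_one]
  have hge : (⊤:ENNReal) ≤ ∫⁻ (y : Fin n → ℝ), ENNReal.ofReal
      (Real.exp (c₀ + ∑ i, (c i * y i + lam i / 2 * y i ^ 2))) := by
    have hind : ∀ y : E, S.indicator (fun _ => ENNReal.ofReal m₀) y ≤
        ENNReal.ofReal (Real.exp (c₀ + ∑ i, (c i * y i + lam i / 2 * y i ^ 2))) := by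
      intro y
      by_cases hy : y ∈ S
      · rw [Set.indicator_of_mem hy]
        exact ENNReal.ofReal_le_ofReal (hlow y hy)
      · rw [Set.indicator_of_notMem hy]
        exact zero_le
    calc (⊤:ENNReal) = ENNReal.ofReal m₀ * volume S := by
          rw [hvol, ENNReal.mul_top (by simpa using (ENNReal.ofReal_pos.2 hm₀pos).ne')]
      _ = ∫⁻ (y : Fin n → ℝ), S.indicator (fun _ => ENNReal.ofReal m₀) y := by
          rw [lintegral_indicator_const hSmeas]
      _ ≤ _ := lintegral_mono hind
  rw [top_le_iff] at hge
  rw [hge] at hlt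
  exact absurd hlt (lt_irrefl _)

lemma gauss_int {S : Matrix (Fin n) (Fin n) ℝ} (hS : S.PosDef) :
    ∫ x : E, Real.exp (-((1/2 : ℝ) * (x ⬝ᵥ (S⁻¹ *ᵥ x)))) = Real.sqrt ((2*Real.pi)^n * S.det) := by
  classical
  have hN : (S⁻¹).PosDef := hS.inv
  have hH : (S⁻¹).IsHermitian := hN.1
  obtain ⟨U, e, hmp, hecoe, hquad⟩ := cov_exists hH
  set ν : Fin n → ℝ := hH.eigenvalues with hν
  have hνpos : ∀ i, 0 < ν i := fun i => hN.eigenvalues_pos i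
  have hdetS : (0:ℝ) < S.det := hS.det_pos
  have h1 : ∫ y : E, Real.exp (-((1/2:ℝ) * ((U *ᵥ y) ⬝ᵥ (S⁻¹ *ᵥ (U *ᵥ y)))))
      = ∫ x : E, Real.exp (-((1/2:ℝ) * (x ⬝ᵥ (S⁻¹ *ᵥ x)))) := by
    have h := hmp.integral_comp e.measurableEmbedding
      (fun x => Real.exp (-((1/2 : ℝ) * (x ⬝ᵥ (S⁻¹ *ᵥ x)))))
    simp only [hecoe] at h
    exact h
  rw [← h1]
  have h2 : ∀ y : E, Real.exp (-((1/2:ℝ) * ((U *ᵥ y) ⬝ᵥ (S⁻¹ *ᵥ (U *ᵥ y)))))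
      = ∏ i, Real.exp (-(ν i/2) * y i ^ 2) := by
    intro y
    rw [← Real.exp_sum]
    congr 1
    rw [hquad y, Finset.mul_sum, ← Finset.sum_neg_distrib]
    apply Finset.sum_congr rfl
    intro i _
    ring
  simp_rw [h2]
  rw [MeasureTheory.integral_fin_nat_prod_volume_eq_prod (𝕜 := ℝ)
    (fun i (t:ℝ) => Real.exp (-(ν i/2) * t ^ 2))]
  have h3 : ∀ i, ∫ t : ℝ, Real.exp (-(ν i/2) * t ^ 2) = Real.sqrt (2*Real.pi/ν i) := by
    intro i
    rw [integral_gaussian]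
    congr 1
    rw [div_div_eq_mul_div]
    ring
  simp_rw [h3]
  rw [sqrt_prod _ _ (fun i _ => by have := hνpos i; positivity)]
  congr 1
  rw [Finset.prod_div_distrib, Finset.prod_const, Finset.card_univ, Fintype.card_fin]
  have h4 : ∏ i, ν i = S⁻¹.det := by
    have := hH.det_eq_prod_eigenvalues
    simpa using this.symm
  rw [h4, Matrix.det_nonsing_inv, Ring.inverse_eq_inv']
  field_simp


theorem key {f : E → ℝ} (hmeas : Measurable f) (hpos : ∀ x, 0 < f x) (hint : ∫ x, f x = 1)
    (H : ∀ y : E, ConvexOn ℝ Set.univ fun x => f (x + y) / f x) :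
    ∃ (μ : Fin n → ℝ) (S : Matrix (Fin n) (Fin n) ℝ),
      S.PosDef ∧ ∀ x, f x = gaussianDensityFun μ S x := by
  classical
  set g : E → ℝ := fun x => Real.log (f x) with hg
  have hfg : ∀ x, f x = Real.exp (g x) := fun x => (Real.exp_log (hpos x)).symm
  have hratio : ∀ y x : E, f (x + y) / f x = Real.exp (g (x + y) - g x) := by
    intro y x
    rw [Real.exp_sub, ← hfg, ← hfg]
  have Hexp : ∀ y : E, ConvexOn ℝ Set.univ fun x => Real.exp (g (x + y) - g x) := by
    intro y
    have := H y
    simp_rw [hratio y] at this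
    exact this
  have ME := midpoint_eq Hexp
  -- continuity of increments
  have hcont : ∀ y : E, Continuous fun x => g (x + y) - g x := by
    intro y
    have hc : Continuous fun x => Real.exp (g (x + y) - g x) :=
      (Hexp y).locallyLipschitz.continuous
    have h2 : Continuous fun x => Real.log (Real.exp (g (x + y) - g x)) :=
      hc.log (fun x => (Real.exp_pos _).ne')
    simpa [Real.log_exp] using h2
  -- the symmetric biadditive form
  set B : E → E → ℝ := fun x y => g (x + y) - g x - g y + g 0 with hB
  have hBsym : ∀ x y, B x y = B y x := by
    intro x y
    simp only [hB]
    rw [add_comm x y]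
    ring
  have hKadd : ∀ (y u v : E), (g (u + v + y) - g (u + v)) - (g (0 + y) - g 0)
      = ((g (u + y) - g u) - (g (0 + y) - g 0)) + ((g (v + y) - g v) - (g (0 + y) - g 0)) := by
    intro y u v
    have h1 := ME y u v
    have h2 := ME y (u + v) 0
    rw [add_zero] at h2
    linarith
  have hBadd : ∀ (y u v : E), B (u + v) y = B u y + B v y := by
    intro y u v
    have := hKadd y u v
    simp only [hB]
    simp only [zero_add] at this
    linarith
  have hBcont : ∀ y, Continuous fun x => B x y := by
    intro y
    simp only [hB]
    exact ((hcont y).sub continuous_const).add continuous_const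
  -- linearity in the first argument
  set eb : Fin n → E := fun i => fun j => if i = j then (1:ℝ) else 0 with heb
  have hBlin : ∀ y x, B x y = ∑ i, x i * B (eb i) y := by
    intro y x
    set φ : E →+ ℝ := AddMonoidHom.mk' (fun x => B x y) (fun u v => hBadd y u v) with hφ
    set L : E →L[ℝ] ℝ := φ.toRealLinearMap (hBcont y) with hL
    have hcoe : ∀ x, L x = B x y := fun x => rfl
    have := LinearMap.pi_apply_eq_sum_univ (L : E →ₗ[ℝ] ℝ) x
    simp only [smul_eq_mul] at this
    calc B x y = L x := (hcoe x).symm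
      _ = ∑ i, x i * L (eb i) := by
          rw [show (L : E → ℝ) x = (L : E →ₗ[ℝ] ℝ) x from rfl] at *
          convert this using 2
          rfl
      _ = ∑ i, x i * B (eb i) y := by
          apply Finset.sum_congr rfl
          intro i _
          rw [hcoe]
  set M : Matrix (Fin n) (Fin n) ℝ := Matrix.of (fun i j => B (eb i) (eb j)) with hM
  have hBmat : ∀ x y, B x y = x ⬝ᵥ (M *ᵥ y) := by
    intro x y
    rw [hBlin y x, dotProduct]
    apply Finset.sum_congr rfl
    intro i _
    congr 1
    rw [Matrix.mulVec]
    calc B (eb i) y = B y (eb i) := hBsym _ _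
      _ = ∑ j, y j * B (eb j) (eb i) := hBlin (eb i) y
      _ = ∑ j, M i j * y j := by
          apply Finset.sum_congr rfl
          intro j _
          rw [show M i j = B (eb i) (eb j) from rfl, hBsym (eb i) (eb j)]
          ring
      _ = (M *ᵥ y) i := rfl
  have hMherm : M.IsHermitian := by
    ext i j
    simp only [Matrix.conjTranspose_apply, star_trivial]
    exact hBsym (eb j) (eb i)
  -- the additive part
  set ℓ : E → ℝ := fun x => g x - g 0 - (1/2) * B x x with hℓ
  have hBexp : ∀ u v, B u (u + v) = B u u + B u v := by
    intro u v
    rw [hBsym u (u+v), hBadd u u v, hBsym u u, hBsym v u]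
  have hladd : ∀ u v, ℓ (u + v) = ℓ u + ℓ v := by
    intro u v
    have h1 : B (u + v) (u + v) = B u u + 2 * B u v + B v v := by
      rw [hBadd (u+v) u v, hBexp u v, add_comm u v, hBexp v u, hBsym v u]
      ring
    have h2 : g (u + v) = B u v + g u + g v - g 0 := by
      simp only [hB]; ring
    simp only [hℓ]
    rw [h1, h2]
    ring
  have hgmeas : Measurable g := hmeas.log
  have hlmeas : Measurable ℓ := by
    have hBxx : ∀ x, B x x = g (x + x) - 2 * g x + g 0 := by
      intro x; simp only [hB]; ring
    have heq : ℓ = fun x => g x - g 0 - (1/2) * (g (x + x) - 2 * g x + g 0) := by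
      funext x; simp only [hℓ]; rw [hBxx x]
    rw [heq]
    apply Measurable.sub
    · exact hgmeas.sub measurable_const
    · apply Measurable.const_mul
      exact ((hgmeas.comp (measurable_id.add measurable_id)).sub
        ((measurable_const.mul hgmeas : Measurable fun x => (2:ℝ) * g x))).add measurable_const
  have hlcont : Continuous ℓ := continuous_of_additive_of_measurable hladd hlmeas
  set v : E := fun i => ℓ (eb i) with hv
  have hlv : ∀ x, ℓ x = v ⬝ᵥ x := by
    intro x
    set φ : E →+ ℝ := AddMonoidHom.mk' ℓ (fun u w => hladd u w) with hφ
    set L : E →L[ℝ] ℝ := φ.toRealLinearMap hlcont with hL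
    have hcoe : ∀ x, L x = ℓ x := fun x => rfl
    have := LinearMap.pi_apply_eq_sum_univ (L : E →ₗ[ℝ] ℝ) x
    simp only [smul_eq_mul] at this
    calc ℓ x = L x := (hcoe x).symm
      _ = ∑ i, x i * L (eb i) := by convert this using 2 <;> rfl
      _ = v ⬝ᵥ x := by
          rw [dotProduct]
          apply Finset.sum_congr rfl
          intro i _
          rw [hcoe, hv]
          ring
  -- representation of g
  have hrep : ∀ x, g x = g 0 + v ⬝ᵥ x + (1/2) * (x ⬝ᵥ (M *ᵥ x)) := by
    intro x
    have : ℓ x = g x - g 0 - (1/2) * B x x := rfl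
    rw [hlv x, hBmat x x] at this
    linarith
  have hIntf : Integrable f := by
    by_contra hcon
    rw [integral_undef hcon] at hint
    exact zero_ne_one hint
  -- eigenvalues of M are negative
  obtain ⟨U, e, hmp, hecoe, hquad⟩ := cov_exists hMherm
  set lam : Fin n → ℝ := hMherm.eigenvalues with hlam
  have hlamneg : ∀ i, lam i < 0 := by
    intro j
    by_contra hcon
    push_neg at hcon
    have hIntfe : Integrable (f ∘ ⇑e) := (hmp.integrable_comp_emb e.measurableEmbedding).2 hIntf
    have hform : (f ∘ ⇑e) = fun y : E =>
        Real.exp (g 0 + ∑ i, ((v ᵥ* U) i * y i + lam i / 2 * y i ^ 2)) := by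
      funext y
      simp only [Function.comp_apply]
      rw [hfg (e y), hecoe y, hrep (U *ᵥ y)]
      congr 1
      rw [hquad y, Matrix.dotProduct_mulVec v U y, dotProduct, Finset.mul_sum,
        add_assoc, ← Finset.sum_add_distrib]
      congr 1
      apply Finset.sum_congr rfl
      intro i _
      ring
    rw [hform] at hIntfe
    exact not_integrable_of_eig_nonneg (g 0) (v ᵥ* U) lam j hcon hIntfe
  -- positive definiteness of N = -M
  set N : Matrix (Fin n) (Fin n) ℝ := -M with hN
  have hNherm : N.IsHermitian := hMherm.neg
  have hNpd : N.PosDef := by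
    refine Matrix.PosDef.of_dotProduct_mulVec_pos hNherm fun x hx => ?_
    have hxy : x = U *ᵥ (e.symm x) := by
      rw [← hecoe (e.symm x)]
      simp
    set y : E := e.symm x with hy
    have hyne : y ≠ 0 := by
      intro h0
      apply hx
      rw [hxy, h0]
      simp [Matrix.mulVec_zero]
    have hq : x ⬝ᵥ (M *ᵥ x) = ∑ i, lam i * y i ^ 2 := by
      calc x ⬝ᵥ (M *ᵥ x) = (U *ᵥ y) ⬝ᵥ (M *ᵥ (U *ᵥ y)) := by rw [← hxy]
        _ = ∑ i, lam i * y i ^ 2 := hquad y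
    have hstar : star x = x := by simp
    rw [hstar]
    have h1 : x ⬝ᵥ (N *ᵥ x) = -(x ⬝ᵥ (M *ᵥ x)) := by
      rw [hN, Matrix.neg_mulVec, dotProduct_neg]
    rw [h1, hq]
    rw [← Finset.sum_neg_distrib]
    obtain ⟨i₀, hi₀⟩ := Function.ne_iff.1 hyne
    apply Finset.sum_pos'
    · intro i _
      have := hlamneg i
      nlinarith [sq_nonneg (y i)]
    · refine ⟨i₀, Finset.mem_univ _, ?_⟩
      have h2 := hlamneg i₀
      have h3 : 0 < y i₀ ^ 2 := by
        apply sq_pos_of_ne_zero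
        simpa using hi₀
      nlinarith
  -- build S and μ
  have hNdet : IsUnit N.det := by
    have := hNpd.det_pos
    exact isUnit_iff_ne_zero.2 this.ne'
  set S : Matrix (Fin n) (Fin n) ℝ := N⁻¹ with hS
  have hSpd : S.PosDef := hNpd.inv
  have hSinv : S⁻¹ = N := Matrix.nonsing_inv_nonsing_inv N hNdet
  set μ : E := S *ᵥ v with hμ
  have hNμ : N *ᵥ μ = v := by
    rw [hμ, hS, Matrix.mulVec_mulVec, Matrix.mul_nonsing_inv N hNdet, Matrix.one_mulVec]
  -- the density is proportional
  set Z : ℝ := Real.sqrt ((2*Real.pi)^n * S.det) with hZ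
  have hZpos : 0 < Z := by
    apply Real.sqrt_pos.2
    have := hSpd.det_pos
    positivity
  set C : ℝ := Z⁻¹ * Real.exp (-(1/2) * (μ ⬝ᵥ (N *ᵥ μ))) with hC
  have hCpos : 0 < C := by positivity
  have hGform : ∀ x, gaussianDensityFun μ S x =
      C * Real.exp (v ⬝ᵥ x + (1/2) * (x ⬝ᵥ (M *ᵥ x))) := by
    intro x
    rw [gaussianDensityFun, hSinv]
    have hexpand : (x - μ) ⬝ᵥ (N *ᵥ (x - μ))
        = x ⬝ᵥ (N *ᵥ x) - 2 * (v ⬝ᵥ x) + μ ⬝ᵥ (N *ᵥ μ) := by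
      rw [Matrix.mulVec_sub, dotProduct_sub, sub_dotProduct,
        sub_dotProduct]
      have h1 : μ ⬝ᵥ (N *ᵥ x) = x ⬝ᵥ (N *ᵥ μ) := dot_symm hNherm μ x
      have h2 : x ⬝ᵥ (N *ᵥ μ) = x ⬝ᵥ v := by rw [hNμ]
      have h3 : μ ⬝ᵥ (N *ᵥ μ) = μ ⬝ᵥ (N *ᵥ μ) := rfl
      rw [h1, h2]
      rw [dotProduct_comm x v]
      ring
    have hxNx : x ⬝ᵥ (N *ᵥ x) = -(x ⬝ᵥ (M *ᵥ x)) := by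
      rw [hN, Matrix.neg_mulVec, dotProduct_neg]
    rw [hexpand, hxNx, hC, hZ]
    rw [mul_assoc, ← Real.exp_add]
    congr 2
    ring
  -- both integrate to one
  set P : E → ℝ := fun x => Real.exp (v ⬝ᵥ x + (1/2) * (x ⬝ᵥ (M *ᵥ x))) with hP
  have hfP : ∀ x, f x = Real.exp (g 0) * P x := by
    intro x
    rw [hfg x, hrep x, hP]
    rw [← Real.exp_add]
    congr 1
    ring
  have hPint : Integrable P := by
    have : P = fun x => Real.exp (-(g 0)) * f x := by
      funext x
      rw [hfP x, ← mul_assoc, ← Real.exp_add]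
      simp
    rw [this]
    exact hIntf.const_mul _
  set I : ℝ := ∫ x, P x with hI
  have hIpos : 0 < I := by
    rw [hI]
    rw [integral_pos_iff_support_of_nonneg (fun x => (Real.exp_pos _).le) hPint]
    have hsupp : Function.support P = Set.univ := by
      ext x
      simp [hP, Real.exp_ne_zero]
    rw [hsupp]
    calc (0:ENNReal) < volume (Metric.ball (0:Fin n → ℝ) 1) :=
          Metric.measure_ball_pos _ _ one_pos
      _ ≤ volume (Set.univ : Set (Fin n → ℝ)) := measure_mono (Set.subset_univ _)
  have hf1 : Real.exp (g 0) * I = 1 := by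
    rw [hI, ← MeasureTheory.integral_const_mul]
    rw [← hint]
    apply integral_congr_ae
    filter_upwards with x
    rw [hfP x]
  have hG1 : C * I = 1 := by
    have hGint : ∫ x, gaussianDensityFun μ S x = C * I := by
      simp_rw [hGform]
      rw [MeasureTheory.integral_const_mul]
    have hGval : ∫ x, gaussianDensityFun μ S x = 1 := by
      have htrans : ∫ x : E, Real.exp (-((1/2:ℝ) * ((x - μ) ⬝ᵥ (S⁻¹ *ᵥ (x - μ)))))
          = ∫ x : E, Real.exp (-((1/2:ℝ) * (x ⬝ᵥ (S⁻¹ *ᵥ x)))) :=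
        integral_sub_right_eq_self (fun u => Real.exp (-((1/2:ℝ) * (u ⬝ᵥ (S⁻¹ *ᵥ u))))) μ
      rw [show (fun x => gaussianDensityFun μ S x) = fun x =>
          Z⁻¹ * Real.exp (-((1/2:ℝ) * ((x - μ) ⬝ᵥ (S⁻¹ *ᵥ (x - μ))))) from rfl]
      rw [MeasureTheory.integral_const_mul, htrans, gauss_int hSpd, ← hZ]
      exact inv_mul_cancel₀ hZpos.ne'
    rw [← hGint, hGval]
  have hCeq : Real.exp (g 0) = C := by
    have := hf1.trans hG1.symm
    exact mul_right_cancel₀ hIpos.ne' this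
  refine ⟨μ, S, hSpd, fun x => ?_⟩
  rw [hfP x, hGform x, hCeq]


lemma dot_affine_convex (c : ℝ) (w : E) : ConvexOn ℝ Set.univ (fun x : E => c + w ⬝ᵥ x) := by
  refine ⟨convex_univ, fun x _ z _ a b ha hb hab => ?_⟩
  have h1 : w ⬝ᵥ (a • x + b • z) = a * (w ⬝ᵥ x) + b * (w ⬝ᵥ z) := by
    rw [dotProduct_add, dotProduct_smul, dotProduct_smul]
    simp [smul_eq_mul]
  simp only [smul_eq_mul, h1]
  have hc : a * c + b * c = c := by rw [← add_mul, hab, one_mul]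
  have h2 : a * (c + w ⬝ᵥ x) + b * (c + w ⬝ᵥ z)
      = (a * c + b * c) + (a * (w ⬝ᵥ x) + b * (w ⬝ᵥ z)) := by ring
  rw [h2, hc]

lemma dot_affine_concave (c : ℝ) (w : E) : ConcaveOn ℝ Set.univ (fun x : E => c + w ⬝ᵥ x) := by
  refine ⟨convex_univ, fun x _ z _ a b ha hb hab => ?_⟩
  have h1 : w ⬝ᵥ (a • x + b • z) = a * (w ⬝ᵥ x) + b * (w ⬝ᵥ z) := by
    rw [dotProduct_add, dotProduct_smul, dotProduct_smul]
    simp [smul_eq_mul]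
  simp only [smul_eq_mul, h1]
  have hc : a * c + b * c = c := by rw [← add_mul, hab, one_mul]
  have h2 : a * (c + w ⬝ᵥ x) + b * (c + w ⬝ᵥ z)
      = (a * c + b * c) + (a * (w ⬝ᵥ x) + b * (w ⬝ᵥ z)) := by ring
  rw [h2, hc]

lemma gauss_ratio {S : Matrix (Fin n) (Fin n) ℝ} (hS : S.PosDef) (μ y : E) :
    ∃ (cc : ℝ) (ww : E), ∀ x,
      gaussianDensityFun μ S (x + y) / gaussianDensityFun μ S x = Real.exp (cc + ww ⬝ᵥ x) := by
  classical
  set N := S⁻¹ with hNdef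
  have hNh : N.IsHermitian := hS.inv.1
  set Z : ℝ := Real.sqrt ((2 * Real.pi) ^ n * S.det) with hZ
  have hZpos : 0 < Z := Real.sqrt_pos.2 (by have := hS.det_pos; positivity)
  refine ⟨y ⬝ᵥ (N *ᵥ μ) - (1/2) * (y ⬝ᵥ (N *ᵥ y)), -(N *ᵥ y), fun x => ?_⟩
  have hEdiff : (-((1/2 : ℝ) * ((x + y - μ) ⬝ᵥ (N *ᵥ (x + y - μ)))))
      - (-((1/2 : ℝ) * ((x - μ) ⬝ᵥ (N *ᵥ (x - μ)))))
      = (y ⬝ᵥ (N *ᵥ μ) - (1/2) * (y ⬝ᵥ (N *ᵥ y))) + (-(N *ᵥ y)) ⬝ᵥ x := by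
    have hsplit : x + y - μ = (x - μ) + y := by abel
    rw [hsplit]
    rw [Matrix.mulVec_add, dotProduct_add, add_dotProduct,
      add_dotProduct]
    have hcross : (x - μ) ⬝ᵥ (N *ᵥ y) = y ⬝ᵥ (N *ᵥ (x - μ)) := dot_symm hNh _ _
    have hrest : y ⬝ᵥ (N *ᵥ (x - μ)) = y ⬝ᵥ (N *ᵥ x) - y ⬝ᵥ (N *ᵥ μ) := by
      rw [Matrix.mulVec_sub, dotProduct_sub]
    have hyx : y ⬝ᵥ (N *ᵥ x) = (N *ᵥ y) ⬝ᵥ x := by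
      rw [dot_symm hNh y x, dotProduct_comm]
    rw [hcross, hrest, hyx, neg_dotProduct]
    ring
  rw [gaussianDensityFun, gaussianDensityFun, ← hNdef, ← hZ]
  rw [mul_div_mul_left _ _ (by positivity : (Z:ℝ)⁻¹ ≠ 0)]
  rw [← Real.exp_sub, hEdiff]

theorem stmt10 {n : ℕ} (f : (Fin n → ℝ) → ℝ)
    (hmeas : Measurable f) (hpos : ∀ x, 0 < f x)
    (hint : ∫ x, f x = 1) :
    List.TFAE
      [∀ y : Fin n → ℝ, ConvexOn ℝ Set.univ (fun x => f (x + y) / f x),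
       ∀ y : Fin n → ℝ, ConvexOn ℝ Set.univ (fun x => Real.log (f (x + y) / f x)),
       ∀ y : Fin n → ℝ, ConcaveOn ℝ Set.univ (fun x => Real.log (f (x + y) / f x)),
       ∃ (μ : Fin n → ℝ) (S : Matrix (Fin n) (Fin n) ℝ),
         S.PosDef ∧ ∀ x, f x = gaussianDensityFun μ S x] := by
  have hratio_pos : ∀ y x : Fin n → ℝ, 0 < f (x + y) / f x :=
    fun y x => div_pos (hpos _) (hpos _)
  tfae_have 2 → 1 := by
    intro h2 y
    have heq : (fun x => f (x + y) / f x)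
        = fun x => Real.exp (Real.log (f (x + y) / f x)) := by
      funext x
      rw [Real.exp_log (hratio_pos y x)]
    rw [heq]
    exact convexOn_exp_comp (h2 y)
  tfae_have 3 → 2 := by
    intro h3 y
    have h1 : ConvexOn ℝ Set.univ fun x => -(Real.log (f (x + -y) / f x)) := (h3 (-y)).neg
    have h2 := convexOn_translate h1 y
    have heq : (fun x => -(Real.log (f ((x + y) + -y) / f (x + y))))
        = fun x => Real.log (f (x + y) / f x) := by
      funext x
      rw [show (x + y) + -y = x by abel]
      rw [Real.log_div (hpos x).ne' (hpos (x+y)).ne', Real.log_div (hpos (x+y)).ne' (hpos x).ne']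
      ring
    rwa [heq] at h2
  tfae_have 1 → 4 := fun h1 => key hmeas hpos hint h1
  tfae_have 4 → 1 := by
    rintro ⟨μ, S, hS, hf⟩ y
    obtain ⟨cc, ww, hcw⟩ := gauss_ratio hS μ y
    have heq : (fun x => f (x + y) / f x) = fun x => Real.exp (cc + ww ⬝ᵥ x) := by
      funext x
      rw [hf (x + y), hf x, hcw x]
    rw [heq]
    exact convexOn_exp_comp (dot_affine_convex cc ww)
  tfae_have 4 → 2 := by
    rintro ⟨μ, S, hS, hf⟩ y
    obtain ⟨cc, ww, hcw⟩ := gauss_ratio hS μ y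
    have heq : (fun x => Real.log (f (x + y) / f x)) = fun x => cc + ww ⬝ᵥ x := by
      funext x
      rw [hf (x + y), hf x, hcw x, Real.log_exp]
    rw [heq]
    exact dot_affine_convex cc ww
  tfae_have 4 → 3 := by
    rintro ⟨μ, S, hS, hf⟩ y
    obtain ⟨cc, ww, hcw⟩ := gauss_ratio hS μ y
    have heq : (fun x => Real.log (f (x + y) / f x)) = fun x => cc + ww ⬝ᵥ x := by
      funext x
      rw [hf (x + y), hf x, hcw x, Real.log_exp]
    rw [heq]
    exact dot_affine_concave cc ww
  tfae_finish
end

section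
/- There is no positive Borel density f : ℝⁿ → ℝ such that for every y ∈ ℝⁿ the map x ↦ f(x+y)/f(x) is concave in x. -/
open MeasureTheory

theorem stmt11 {n : ℕ} (hn : 0 < n) :
    ¬ ∃ f : (Fin n → ℝ) → ℝ,
      Measurable f ∧ (∀ x, 0 < f x) ∧ (∫ x, f x = 1) ∧
      ∀ y : Fin n → ℝ, ConcaveOn ℝ Set.univ (fun x => f (x + y) / f x) := by
  rintro ⟨f, hmeas, hpos, hint, hconc⟩
  haveI : Nonempty (Fin n) := ⟨⟨0, hn⟩⟩
  have hfi : Integrable f := by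
    by_contra h
    rw [integral_undef h] at hint
    exact one_ne_zero hint.symm
  have htrans : ∀ x : Fin n → ℝ, ∫ y, f (x + y) = 1 := fun x => by
    rw [integral_add_left_eq_self f x]; exact hint
  have htransInt : ∀ x : Fin n → ℝ, Integrable (fun y => f (x + y)) := fun x =>
    hfi.comp_add_left x
  have hIdiv : ∀ x : Fin n → ℝ, Integrable (fun y => f (x + y) / f x) := fun x =>
    (htransInt x).div_const _
  have hIval : ∀ x : Fin n → ℝ, (∫ y, f (x + y) / f x) = (f x)⁻¹ := fun x => by
    rw [integral_div, htrans x, one_div]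
  set g : (Fin n → ℝ) → ℝ := fun x => (f x)⁻¹ with hgdef
  have hgpos : ∀ x, 0 < g x := fun x => inv_pos.2 (hpos x)
  have hg : ConcaveOn ℝ Set.univ g := by
    refine ⟨convex_univ, ?_⟩
    intro x _ z _ a b ha hb hab
    have key : ∀ y, a * (f (x + y) / f x) + b * (f (z + y) / f z)
        ≤ f ((a • x + b • z) + y) / f (a • x + b • z) := by
      intro y
      have h := (hconc y).2 (Set.mem_univ x) (Set.mem_univ z) ha hb hab
      simpa [smul_eq_mul] using h
    have hL : Integrable (fun y => a * (f (x + y) / f x) + b * (f (z + y) / f z)) :=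
      ((hIdiv x).const_mul a).add ((hIdiv z).const_mul b)
    have hR : Integrable (fun y => f ((a • x + b • z) + y) / f (a • x + b • z)) :=
      hIdiv _
    have hmono := integral_mono hL hR key
    rw [integral_add ((hIdiv x).const_mul a) ((hIdiv z).const_mul b),
      integral_const_mul, integral_const_mul, hIval, hIval, hIval] at hmono
    simpa [hgdef, smul_eq_mul] using hmono
  -- g is constant
  have hle : ∀ x z : Fin n → ℝ, g x ≤ g z := by
    intro x z
    by_contra h
    push_neg at h
    set t : ℝ := (g z + g x) / (2 * g x) with htdef
    have hx := hgpos x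
    have hz := hgpos z
    have ht0 : 0 < t := by positivity
    have ht1 : t < 1 := by
      rw [htdef, div_lt_one (by positivity)]; linarith
    set w : Fin n → ℝ := (1 - t)⁻¹ • (z - t • x) with hwdef
    have hzw : z = t • x + (1 - t) • w := by
      rw [hwdef, smul_smul, mul_inv_cancel₀ (by linarith), one_smul]
      abel
    have hcomb := hg.2 (Set.mem_univ x) (Set.mem_univ w) ht0.le
      (by linarith : (0:ℝ) ≤ 1 - t) (by ring)
    rw [← hzw] at hcomb
    have hgt : t * g x = (g z + g x) / 2 := by
      rw [htdef]; field_simp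
    have hw := hgpos w
    have : t * g x + (1 - t) * g w ≤ g z := by simpa [smul_eq_mul] using hcomb
    nlinarith
  have hfconst : ∀ x : Fin n → ℝ, f x = f 0 := by
    intro x
    have h1 := hle x 0
    have h2 := hle 0 x
    have : g x = g 0 := le_antisymm h1 h2
    have := congrArg (·⁻¹) this
    simpa [hgdef, inv_inv] using this
  have hvol : (volume : Measure (Fin n → ℝ)) Set.univ = ⊤ := by
    exact MeasureTheory.measure_univ_of_isAddLeftInvariant volume
  rw [show f = fun _ => f 0 from funext hfconst] at hint
  rw [integral_const, measureReal_def, hvol] at hint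
  simp at hint
end

section
/- For f(x) = c·e^{−x⁴} on ℝ and any y with y² ≥ 6, the function x ↦ f(x+y)/f(x) is convex on ℝ. -/
theorem stmt15 (c : ℝ) (hc : 0 < c) (f : ℝ → ℝ)
    (hf : ∀ x, f x = c * Real.exp (-(x ^ 4))) (y : ℝ) (hy : 6 ≤ y ^ 2) :
    ConvexOn ℝ Set.univ (fun x => f (x + y) / f x) := by
  have hfun : (fun x => f (x + y) / f x) = fun x => Real.exp (x ^ 4 - (x + y) ^ 4) := by
    funext x
    rw [hf, hf, mul_div_mul_left _ _ (ne_of_gt hc), ← Real.exp_sub]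
    ring_nf
  rw [hfun]
  set h : ℝ → ℝ := fun x => Real.exp (x ^ 4 - (x + y) ^ 4) with hh
  have hd1 : ∀ x : ℝ, HasDerivAt h ((4 * x ^ 3 - 4 * (x + y) ^ 3) * h x) x := by
    intro x
    have hg : HasDerivAt (fun x : ℝ => x ^ 4 - (x + y) ^ 4) (4 * x ^ 3 - 4 * (x + y) ^ 3) x := by
      have h1 : HasDerivAt (fun x : ℝ => x ^ 4) (4 * x ^ 3) x := by
        simpa using hasDerivAt_pow 4 x
      have h2 : HasDerivAt (fun x : ℝ => (x + y) ^ 4) (4 * (x + y) ^ 3) x := by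
        have := (hasDerivAt_pow 4 (x + y)).comp x ((hasDerivAt_id x).add_const y)
        simpa [Function.comp_def] using this
      exact h1.sub h2
    have := hg.exp
    rw [hh]
    simpa [mul_comm] using this
  have hderiv : deriv h = fun x => (4 * x ^ 3 - 4 * (x + y) ^ 3) * h x := by
    funext x; exact (hd1 x).deriv
  have hd2 : ∀ x : ℝ, HasDerivAt (deriv h)
      (((12 * x ^ 2 - 12 * (x + y) ^ 2) + (4 * x ^ 3 - 4 * (x + y) ^ 3) ^ 2) * h x) x := by
    intro x
    rw [hderiv]
    have hp : HasDerivAt (fun x : ℝ => 4 * x ^ 3 - 4 * (x + y) ^ 3)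
        (12 * x ^ 2 - 12 * (x + y) ^ 2) x := by
      have h1 := (hasDerivAt_pow 3 x).const_mul (4 : ℝ)
      have h2 := ((hasDerivAt_pow 3 (x + y)).comp x ((hasDerivAt_id x).add_const y)).const_mul (4 : ℝ)
      have := h1.sub h2
      refine this.congr_deriv ?_
      push_cast
      ring
    have := hp.mul (hd1 x)
    refine this.congr_deriv ?_
    ring
  apply convexOn_univ_of_deriv2_nonneg
  · exact fun x => (hd1 x).differentiableAt
  · exact fun x => (hd2 x).differentiableAt
  · intro x
    have h2 : deriv^[2] h x = deriv (deriv h) x := by simp [Function.iterate_succ]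
    rw [h2, (hd2 x).deriv]
    have he : 0 < h x := by rw [hh]; exact Real.exp_pos _
    have hpoly : 0 ≤ (12 * x ^ 2 - 12 * (x + y) ^ 2) + (4 * x ^ 3 - 4 * (x + y) ^ 3) ^ 2 := by
      nlinarith [sq_nonneg (2 * x + y), sq_nonneg ((2 * x + y) * y), sq_nonneg y,
        sq_nonneg (3 * (2 * x + y) ^ 2 + y ^ 2 - 1), sq_nonneg ((2 * x + y) - y),
        sq_nonneg ((2 * x + y) + y), mul_nonneg (sq_nonneg (2 * x + y)) (sq_nonneg y)]
    exact mul_nonneg hpoly he.le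
end

section
/- For f(x) = c·e^{−x⁴} on ℝ and any x ≠ 0, there exist y arbitrarily close to 0 such that x ↦ f(x+y)/f(x) is not convex; specifically, ∂²h/∂x²(x,y)/y → −24x·h(x,0) has nonzero limit behavior forcing ∂²h/∂x²(x,y) < 0 for suitable small y. -/
private lemma mono_deriv_nonneg {g : ℝ → ℝ} (hg : Monotone g) {a x : ℝ}
    (h : HasDerivAt g a x) : 0 ≤ a := by
  have ht : Filter.Tendsto (slope g x) (nhdsWithin x (Set.Ioi x)) (nhds a) :=
    (hasDerivAt_iff_tendsto_slope.mp h).mono_left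
      (nhdsWithin_mono x fun t ht => ne_of_gt ht)
  refine ge_of_tendsto ht ?_
  filter_upwards [self_mem_nhdsWithin] with t ht
  have h1 : g x ≤ g t := hg (le_of_lt ht)
  have h2 : 0 < t - x := sub_pos.mpr ht
  rw [slope_def_field]
  exact div_nonneg (by linarith) h2.le

private lemma key_pos (x : ℝ) (hx : 0 < x) (ε : ℝ) (hε : 0 < ε) :
    ∃ y : ℝ, 0 < y ∧ y < ε ∧
      -12 * y * (2 * x + y) + 16 * y ^ 2 * (3 * x ^ 2 + 3 * x * y + y ^ 2) ^ 2 < 0 := by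
  refine ⟨min (ε / 2) (min x (1 / (33 * x ^ 3))), ?_, ?_, ?_⟩
  · have : 0 < 1 / (33 * x ^ 3) := by positivity
    simp only [lt_min_iff]
    exact ⟨by linarith, hx, this⟩
  · exact lt_of_le_of_lt (min_le_left _ _) (by linarith)
  · set y := min (ε / 2) (min x (1 / (33 * x ^ 3))) with hy
    have hy0 : 0 < y := by
      have : 0 < 1 / (33 * x ^ 3) := by positivity
      simp only [hy, lt_min_iff]
      exact ⟨by linarith, hx, this⟩
    have hyx : y ≤ x := le_trans (min_le_right _ _) (min_le_left _ _)
    have hyc : y ≤ 1 / (33 * x ^ 3) := le_trans (min_le_right _ _) (min_le_right _ _)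
    have hyc' : 33 * (y * x ^ 3) ≤ 1 := by
      have h33 : (0:ℝ) < 33 * x ^ 3 := by positivity
      calc 33 * (y * x ^ 3) = (33 * x ^ 3) * y := by ring
        _ ≤ (33 * x ^ 3) * (1 / (33 * x ^ 3)) := mul_le_mul_of_nonneg_left hyc h33.le
        _ = 1 := by field_simp
    have hq : 3 * x ^ 2 + 3 * x * y + y ^ 2 ≤ 7 * x ^ 2 := by nlinarith
    have hq0 : 0 < 3 * x ^ 2 + 3 * x * y + y ^ 2 := by positivity
    have hsq : (3 * x ^ 2 + 3 * x * y + y ^ 2) ^ 2 ≤ 49 * x ^ 4 := by nlinarith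
    have h1 : 16 * y ^ 2 * (3 * x ^ 2 + 3 * x * y + y ^ 2) ^ 2 ≤ 16 * y ^ 2 * (49 * x ^ 4) := by
      have : (0:ℝ) ≤ 16 * y ^ 2 := by positivity
      nlinarith
    have h2 : 16 * y ^ 2 * (49 * x ^ 4) = 784 * y * (y * x ^ 3) * x := by ring
    nlinarith [mul_pos hy0 hx, mul_pos (mul_pos hy0 hy0) hx]

theorem stmt16 (c : ℝ) (hc : 0 < c) (f : ℝ → ℝ)
    (hf : ∀ x, f x = c * Real.exp (-(x ^ 4))) (x : ℝ) (hx : x ≠ 0) :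
    ∀ ε > 0, ∃ y : ℝ, y ≠ 0 ∧ |y| < ε ∧
      deriv (fun x => deriv (fun x => f (x + y) / f x) x) x < 0 ∧
      ¬ ConvexOn ℝ Set.univ (fun x => f (x + y) / f x) := by
  intro ε hε
  -- choose y
  obtain ⟨y, hy0, hyε, hkey⟩ :
      ∃ y : ℝ, y ≠ 0 ∧ |y| < ε ∧
        -12 * y * (2 * x + y) + 16 * y ^ 2 * (3 * x ^ 2 + 3 * x * y + y ^ 2) ^ 2 < 0 := by
    rcases hx.lt_or_gt with hneg | hpos
    · obtain ⟨y, hy1, hy2, hy3⟩ := key_pos (-x) (by linarith) ε hε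
      refine ⟨-y, by simp [ne_of_gt hy1], by rw [abs_neg, abs_of_pos hy1]; exact hy2, ?_⟩
      nlinarith [hy3]
    · obtain ⟨y, hy1, hy2, hy3⟩ := key_pos x hpos ε hε
      exact ⟨y, ne_of_gt hy1, by rw [abs_of_pos hy1]; exact hy2, hy3⟩
  refine ⟨y, hy0, hyε, ?_⟩
  set H : ℝ → ℝ := fun t => Real.exp (t ^ 4 - (t + y) ^ 4) with hH
  have hfe : (fun t => f (t + y) / f t) = H := by
    funext t
    rw [hf, hf, mul_div_mul_left _ _ (ne_of_gt hc), ← Real.exp_sub]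
    show _ = Real.exp (t ^ 4 - (t + y) ^ 4)
    congr 1
    ring
  -- first derivative
  have hd1 : ∀ t : ℝ, HasDerivAt H ((4 * t ^ 3 - 4 * (t + y) ^ 3) * H t) t := by
    intro t
    have h1 : HasDerivAt (fun t : ℝ => t ^ 4 - (t + y) ^ 4)
        (4 * t ^ 3 - 4 * (t + y) ^ 3) t := by
      have ha : HasDerivAt (fun t : ℝ => t ^ 4) (4 * t ^ 3) t := by
        simpa using hasDerivAt_pow 4 t
      have hb : HasDerivAt (fun t : ℝ => (t + y) ^ 4) (4 * (t + y) ^ 3) t := by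
        have := ((hasDerivAt_id t).add_const y).fun_pow 4
        simpa using this
      exact ha.sub hb
    simpa [hH, mul_comm] using h1.exp
  set H' : ℝ → ℝ := fun t => (4 * t ^ 3 - 4 * (t + y) ^ 3) * H t with hH'
  have hdH : deriv H = H' := funext fun t => (hd1 t).deriv
  -- second derivative at x
  set v : ℝ := (12 * x ^ 2 - 12 * (x + y) ^ 2) * H x +
      (4 * x ^ 3 - 4 * (x + y) ^ 3) * ((4 * x ^ 3 - 4 * (x + y) ^ 3) * H x) with hv
  have hd2 : HasDerivAt H' v x := by
    have hp : HasDerivAt (fun t : ℝ => 4 * t ^ 3 - 4 * (t + y) ^ 3)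
        (12 * x ^ 2 - 12 * (x + y) ^ 2) x := by
      have ha : HasDerivAt (fun t : ℝ => t ^ 3) (3 * x ^ 2) x := by
        simpa using hasDerivAt_pow 3 x
      have hb : HasDerivAt (fun t : ℝ => (t + y) ^ 3) (3 * (x + y) ^ 2) x := by
        have := ((hasDerivAt_id x).add_const y).fun_pow 3
        simpa using this
      have := (ha.const_mul 4).fun_sub (hb.const_mul 4)
      rw [show (12:ℝ) * x ^ 2 - 12 * (x + y) ^ 2 = 4 * (3 * x ^ 2) - 4 * (3 * (x + y) ^ 2) by ring]
      exact this
    exact hp.mul (hd1 x)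
  have hvneg : v < 0 := by
    have hHpos : 0 < H x := Real.exp_pos _
    have hfac : v = H x * (-12 * y * (2 * x + y) +
        16 * y ^ 2 * (3 * x ^ 2 + 3 * x * y + y ^ 2) ^ 2) := by
      rw [hv]; ring
    rw [hfac]
    exact mul_neg_of_pos_of_neg hHpos hkey
  constructor
  · rw [hfe]
    have : (fun x => deriv H x) = H' := hdH
    rw [this, hd2.deriv]
    exact hvneg
  · rw [hfe]
    intro hconv
    have hdiff : ∀ t ∈ Set.univ, DifferentiableAt ℝ H t := fun t _ => (hd1 t).differentiableAt
    have hmono : Monotone (deriv H) := by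
      have := hconv.monotoneOn_deriv hdiff
      exact monotoneOn_univ.mp this
    rw [hdH] at hmono
    exact absurd (mono_deriv_nonneg hmono hd2) (not_le.mpr hvneg)
end

section
/- Let g : ℝⁿ → ℝ be strictly positive, continuously differentiable, and suppose there exists ε > 0 such that for every y with ‖y‖ < ε, the map x ↦ g(x+y)/g(x) is convex. Then there exist a matrix A ∈ ℝ^{n×n} (not necessarily positive semidefinite), b ∈ ℝⁿ, c ∈ ℝ with g(x) = exp((1/2) xᵀAx + bᵀx + c), with A symmetric. -/
set_option maxHeartbeats 1000000


open Matrix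

theorem stmt17 {n : ℕ} (g : (Fin n → ℝ) → ℝ)
    (hpos : ∀ x, 0 < g x) (hC1 : ContDiff ℝ 1 g)
    (ε : ℝ) (hε : 0 < ε)
    (hconv : ∀ y : Fin n → ℝ, ‖y‖ < ε →
      ConvexOn ℝ Set.univ (fun x => g (x + y) / g x)) :
    ∃ (A : Matrix (Fin n) (Fin n) ℝ) (b : Fin n → ℝ) (c : ℝ),
      A.IsSymm ∧
      ∀ x, g x = Real.exp ((1 / 2) * (x ⬝ᵥ (A *ᵥ x)) + b ⬝ᵥ x + c) := by
  have hg : Differentiable ℝ g := hC1.differentiable one_ne_zero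
  have hgne : ∀ x, g x ≠ 0 := fun x => (hpos x).ne'
  set L : (Fin n → ℝ) → ((Fin n → ℝ) →L[ℝ] ℝ) := fun x => (g x)⁻¹ • fderiv ℝ g x with hLdef
  -- key midpoint identity for the logarithmic gradient
  have key : ∀ x z : Fin n → ℝ, L (x + z) + L (x - z) = (2:ℝ) • L x := by
    intro x z
    ext y
    rcases eq_or_ne y 0 with rfl | hy
    · simp
    have hynorm : 0 < ‖y‖ := norm_pos_iff.mpr hy
    have hδpos : 0 < ε / ‖y‖ := div_pos hε hynorm
    set F : ℝ → ℝ := fun t =>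
      g (x + z + t • y) / g (x + z) / 2 + g (x - z + t • y) / g (x - z) / 2
        - g (x + t • y) / g x with hF
    have hF0 : F 0 = 0 := by
      simp [hF, div_self (hgne _)]
      norm_num
    have hFnn : ∀ t : ℝ, |t| < ε / ‖y‖ → 0 ≤ F t := by
      intro t ht
      have hty : ‖t • y‖ < ε := by
        rw [norm_smul, Real.norm_eq_abs]
        calc |t| * ‖y‖ < (ε / ‖y‖) * ‖y‖ := by gcongr
          _ = ε := div_mul_cancel₀ _ hynorm.ne'
      have h := (hconv (t • y) hty).2 (Set.mem_univ (x + z)) (Set.mem_univ (x - z))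
        (by norm_num : (0:ℝ) ≤ 1/2) (by norm_num : (0:ℝ) ≤ 1/2) (by norm_num)
      have hmid : (1/2 : ℝ) • (x + z) + (1/2 : ℝ) • (x - z) = x := by module
      rw [hmid] at h
      simp only [smul_eq_mul] at h
      simp only [hF, sub_nonneg]
      linarith
    have hd : ∀ p : Fin n → ℝ, HasDerivAt (fun t : ℝ => g (p + t • y) / g p) (L p y) 0 := by
      intro p
      have h1 : HasDerivAt (fun t : ℝ => p + t • y) y 0 := by
        simpa using ((hasDerivAt_id (0:ℝ)).smul_const y).const_add p
      have h2 : HasDerivAt (fun t : ℝ => g (p + t • y)) (fderiv ℝ g p y) 0 := by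
        have := (hg (p + (0:ℝ) • y)).hasFDerivAt.comp_hasDerivAt 0 h1
        simpa using (show HasDerivAt (fun t : ℝ => g (p + t • y)) (fderiv ℝ g (p + (0:ℝ) • y) y) 0 from this)
      have h3 := h2.div_const (g p)
      simpa [hLdef, div_eq_inv_mul, mul_comm] using h3
    have hFd : HasDerivAt F (L (x + z) y / 2 + L (x - z) y / 2 - L x y) 0 :=
      (((hd (x + z)).div_const 2).add ((hd (x - z)).div_const 2)).sub (hd x)
    have hmin : IsLocalMin F 0 := by
      have hev : ∀ᶠ t in nhds (0:ℝ), F 0 ≤ F t := by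
        filter_upwards [Metric.ball_mem_nhds (0:ℝ) hδpos] with t ht
        rw [hF0]
        exact hFnn t (by simpa [Real.dist_eq] using ht)
      exact hev
    have hzero := hmin.hasDerivAt_eq_zero hFd
    have hlin : L (x + z) y + L (x - z) y = 2 * L x y := by linarith
    simpa [ContinuousLinearMap.add_apply, ContinuousLinearMap.smul_apply, smul_eq_mul]
      using hlin
  have key2 : ∀ a b : Fin n → ℝ, L a + L b = (2:ℝ) • L (midpoint ℝ a b) := by
    intro a b
    have h := key (midpoint ℝ a b) ((2:ℝ)⁻¹ • (a - b))
    rw [show midpoint ℝ a b + (2:ℝ)⁻¹ • (a - b) = a by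
          rw [midpoint_eq_smul_add, invOf_eq_inv]; module,
        show midpoint ℝ a b - (2:ℝ)⁻¹ • (a - b) = b by
          rw [midpoint_eq_smul_add, invOf_eq_inv]; module] at h
    exact h
  have hLcont : Continuous L := by
    exact (hC1.continuous.inv₀ hgne).smul (hC1.continuous_fderiv one_ne_zero)
  set T0 : (Fin n → ℝ) → ((Fin n → ℝ) →L[ℝ] ℝ) := fun x => L x - L 0 with hT0
  have hT0cont : Continuous T0 := hLcont.sub continuous_const
  have hTmid : ∀ a b : Fin n → ℝ, T0 (midpoint ℝ a b) = midpoint ℝ (T0 a) (T0 b) := by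
    intro a b
    ext y
    have h := congrArg (fun φ : (Fin n → ℝ) →L[ℝ] ℝ => φ y) (key2 a b)
    simp only [ContinuousLinearMap.add_apply, ContinuousLinearMap.smul_apply, smul_eq_mul] at h
    have hmr : (midpoint ℝ (T0 a) (T0 b)) y = (2:ℝ)⁻¹ * (T0 a y + T0 b y) := by
      rw [midpoint_eq_smul_add, invOf_eq_inv]
      simp [ContinuousLinearMap.smul_apply, ContinuousLinearMap.add_apply]
      ring
    rw [hmr]
    simp only [hT0, ContinuousLinearMap.sub_apply]
    linarith
  have hT00 : T0 0 = 0 := by simp [hT0]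
  set Tadd : (Fin n → ℝ) →+ ((Fin n → ℝ) →L[ℝ] ℝ) :=
    AddMonoidHom.ofMapMidpoint ℝ ℝ T0 hT00 hTmid with hTadd
  set T : (Fin n → ℝ) →L[ℝ] ((Fin n → ℝ) →L[ℝ] ℝ) :=
    Tadd.toRealLinearMap hT0cont with hT
  have hTapp : ∀ x, T x = T0 x := fun x => rfl
  set f : (Fin n → ℝ) → ℝ := fun x => Real.log (g x) with hf
  have hfd : ∀ x, HasFDerivAt f (L x) x := fun x => ((hg x).hasFDerivAt).log (hgne x)
  have hquad : ∀ x, f x = (1/2) * T x x + L 0 x + f 0 := by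
    intro x
    have hline : ∀ t : ℝ, HasDerivAt (fun s : ℝ => f (s • x)) (L 0 x + t * T x x) t := by
      intro t
      have h1 : HasDerivAt (fun s : ℝ => s • x) x t := by
        simpa using (hasDerivAt_id t).smul_const x
      have h2 := (hfd (t • x)).comp_hasDerivAt t h1
      convert (show HasDerivAt (fun s : ℝ => f (s • x)) (L (t • x) x) t from h2) using 1
      have hLt : L (t • x) = L 0 + T (t • x) := by
        rw [hTapp]; simp [hT0]
      rw [hLt, _root_.map_smul]
      simp [ContinuousLinearMap.add_apply, ContinuousLinearMap.smul_apply, smul_eq_mul]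
    have hcont : Continuous fun t : ℝ => L 0 x + t * T x x :=
      continuous_const.add (continuous_id.mul continuous_const)
    have hint := intervalIntegral.integral_eq_sub_of_hasDerivAt
      (f := fun s : ℝ => f (s • x)) (a := (0:ℝ)) (b := 1)
      (fun t _ => hline t) (hcont.intervalIntegrable 0 1)
    have hval : (∫ t in (0:ℝ)..1, (L 0 x + t * T x x)) = L 0 x + (1/2) * T x x := by
      rw [intervalIntegral.integral_add intervalIntegrable_const
        (intervalIntegral.intervalIntegrable_id.mul_const (T x x))]
      rw [intervalIntegral.integral_const, intervalIntegral.integral_mul_const, integral_id]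
      norm_num
    rw [hval] at hint
    simp only [one_smul, zero_smul] at hint
    linarith
  refine ⟨fun i j => (T (Pi.single i 1) (Pi.single j 1) + T (Pi.single j 1) (Pi.single i 1)) / 2,
    fun i => L 0 (Pi.single i 1), f 0, ?_, ?_⟩
  · exact Matrix.IsSymm.ext fun i j => by ring
  · intro x
    have hxrep : ∑ i, x i • (Pi.single i 1 : Fin n → ℝ) = x := by
      funext j
      simp [Finset.sum_apply, Pi.single_apply]
    have hrep : ∀ φ : (Fin n → ℝ) →L[ℝ] ℝ, φ x = ∑ i, x i * φ (Pi.single i 1) := by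
      intro φ
      conv_lhs => rw [← hxrep]
      rw [map_sum]
      simp [smul_eq_mul]
    have hTx : ∀ u : Fin n → ℝ, T x u = ∑ i, x i * T (Pi.single i 1) u := by
      intro u
      have h := hrep (T.flip u)
      simpa [ContinuousLinearMap.flip_apply] using h
    have hTxx : T x x = ∑ i, ∑ j, x i * (x j * T (Pi.single i 1) (Pi.single j 1)) := by
      calc T x x = ∑ i, x i * (T (Pi.single i 1) x) := hTx x
        _ = ∑ i, ∑ j, x i * (x j * T (Pi.single i 1) (Pi.single j 1)) := by
            refine Finset.sum_congr rfl fun i _ => ?_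
            rw [hrep (T (Pi.single i 1)), Finset.mul_sum]
    have hswap : ∑ i, ∑ j, x i * (x j * T (Pi.single j 1) (Pi.single i 1))
        = ∑ i, ∑ j, x i * (x j * T (Pi.single i 1) (Pi.single j 1)) := by
      rw [Finset.sum_comm]
      exact Finset.sum_congr rfl fun i _ => Finset.sum_congr rfl fun j _ => by ring
    have hAxx : x ⬝ᵥ ((fun i j =>
        (T (Pi.single i 1) (Pi.single j 1) + T (Pi.single j 1) (Pi.single i 1)) / 2 :
        Matrix (Fin n) (Fin n) ℝ) *ᵥ x) = T x x := by
      rw [hTxx]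
      simp only [dotProduct, Matrix.mulVec, Finset.mul_sum]
      calc ∑ i, ∑ j, x i * ((T (Pi.single i 1) (Pi.single j 1)
              + T (Pi.single j 1) (Pi.single i 1)) / 2 * x j)
          = ∑ i, ∑ j, ((x i * (x j * T (Pi.single i 1) (Pi.single j 1))) / 2
              + (x i * (x j * T (Pi.single j 1) (Pi.single i 1))) / 2) :=
            Finset.sum_congr rfl fun i _ => Finset.sum_congr rfl fun j _ => by ring
        _ = (∑ i, ∑ j, x i * (x j * T (Pi.single i 1) (Pi.single j 1))) / 2
              + (∑ i, ∑ j, x i * (x j * T (Pi.single j 1) (Pi.single i 1))) / 2 := by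
            simp [Finset.sum_add_distrib, Finset.sum_div]
        _ = ∑ i, ∑ j, x i * (x j * T (Pi.single i 1) (Pi.single j 1)) := by
            rw [hswap]; ring
    have hbx : (fun i => L 0 (Pi.single i 1)) ⬝ᵥ x = L 0 x := by
      rw [hrep (L 0)]
      simp [dotProduct, mul_comm]
    have hgx : g x = Real.exp (f x) := (Real.exp_log (hpos x)).symm
    rw [hgx, hquad x, hAxx, hbx]
end
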